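/- arXiv:math/0512609 — 6 statements merged into one kernel-verified Lean document; each statement's English description precedes it below -/
import Mathlib

section
/- Let P be an r×r matrix of trigonometric polynomials on ℝ^d, and suppose (w_α)_{α∈ℤ₊^d} is a family of vectors in ℂ^r satisfying the triangular system 2^{|α|} w_α = Σ_{0≤β≤α} (D^{α−β}P)(0) w_β for all α, where D^γ denotes the derivative normalized by 1/γ!. Let N₀ ∈ ℕ satisfy 2^{−N₀}‖P(0)‖ < 1 and (3/4)^{N₀} (1 − 2^{−N₀}‖P(0)‖)^{−1} ≤ 1, and suppose A > 0 satisfies ‖(D^α P)(0)‖ ≤ (A/2)^{|α|}/α! for all α and ‖w_α‖ ≤ A^{|α|}/α! for all |α| ≤ N₀. Then ‖w_α‖ ≤ A^{|α|}/α! for all α ∈ ℤ₊^d. -/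
/-!
Write `T_β = A^{|β|}/β!` and argue by well-founded induction on `α`. For `|α| > N₀`, isolate the
term `β = α` of the recursion. By the inductive hypothesis and the multivariate binomial theorem
`Σ_{β ≤ α} x^{|β|}/β! · y^{|α-β|}/(α-β)! = (x+y)^{|α|}/α!`, the remaining terms have norm at most
`Σ_{β < α} (A/2)^{|α-β|}/(α-β)! · T_β = ((3/2)^{|α|} - 1) T_α`, so
`(2^{|α|} - C₀) ‖w_α‖ ≤ ((3/2)^{|α|} - 1) T_α`. The choice of `N₀` means `(3/2)^n + C₀ ≤ 2^n` at
`n = N₀`, hence for all `n ≥ N₀` because `2^n - (3/2)^n` is nondecreasing, and then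
`‖w_α‖ ≤ T_α` follows.
-/

open Matrix Finset Finsupp
open scoped Nat

lemma add_pow_div_factorial (x y : ℝ) (m : ℕ) :
    (x + y) ^ m / m ! = ∑ b ∈ Iic m, x ^ b / b ! * (y ^ (m - b) / (m - b)!) := by
  rw [← Nat.range_succ_eq_Iic, add_pow, sum_div]
  refine sum_congr rfl fun b hb => ?_
  rw [Nat.cast_choose ℝ (Nat.lt_succ_iff.mp (mem_range.mp hb))]
  field_simp

lemma two_pow_sub_three_halves_pow_mono : Monotone fun n : ℕ => (2 : ℝ) ^ n - (3 / 2) ^ n := by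
  refine monotone_nat_of_le_succ fun n => ?_
  have hle : (3 / 2 : ℝ) ^ n ≤ 2 ^ n := pow_le_pow_left₀ (by norm_num) (by norm_num) n
  have hnonneg : (0 : ℝ) ≤ (3 / 2) ^ n := by positivity
  simp only [pow_succ]
  linarith

lemma three_halves_pow_add_le_two_pow {C0 : ℝ} {N0 n : ℕ}
    (hN1 : (2⁻¹ : ℝ) ^ N0 * C0 < 1) (hN2 : (3 / 4 : ℝ) ^ N0 * (1 - 2⁻¹ ^ N0 * C0)⁻¹ ≤ 1)
    (hn : N0 ≤ n) : (3 / 2 : ℝ) ^ n + C0 ≤ 2 ^ n := by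
  have h : (3 / 4 : ℝ) ^ N0 ≤ 1 - 2⁻¹ ^ N0 * C0 := by
    rwa [← div_eq_mul_inv, div_le_one (by linarith)] at hN2
  have hN0 : (3 / 2 : ℝ) ^ N0 + C0 ≤ 2 ^ N0 := calc
    (3 / 2 : ℝ) ^ N0 + C0 = (3 / 4) ^ N0 * 2 ^ N0 + (2⁻¹ * 2) ^ N0 * C0 := by
      rw [← mul_pow]; norm_num
    _ ≤ (1 - 2⁻¹ ^ N0 * C0) * 2 ^ N0 + (2⁻¹ * 2) ^ N0 * C0 := by gcongr
    _ = 2 ^ N0 := by rw [mul_pow]; ring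
  linarith [two_pow_sub_three_halves_pow_mono hn]

variable {ι : Type*}

/-- The coefficient of `t ^ α` in `exp (x (t₁ + ⋯ + t_d))`. -/
noncomputable def expCoeff (x : ℝ) (α : ι →₀ ℕ) : ℝ :=
  x ^ α.degree / α.prod fun _ n => (n ! : ℝ)

lemma expCoeff_nonneg {x : ℝ} (hx : 0 ≤ x) (α : ι →₀ ℕ) : 0 ≤ expCoeff x α := by
  have : 0 ≤ α.prod fun _ n => (n ! : ℝ) := prod_nonneg fun _ _ => by positivity
  unfold expCoeff
  positivity

lemma expCoeff_mul_left (c x : ℝ) (α : ι →₀ ℕ) :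
    expCoeff (c * x) α = c ^ α.degree * expCoeff x α := by
  rw [expCoeff, expCoeff, mul_pow, mul_div_assoc]

@[simp]
lemma expCoeff_zero_right (x : ℝ) : expCoeff x (0 : ι →₀ ℕ) = 1 := by
  simp [expCoeff]

section Fintype

variable [Fintype ι]

lemma expCoeff_eq_prod (x : ℝ) (α : ι →₀ ℕ) : expCoeff x α = ∏ i, x ^ α i / (α i)! := by
  rw [expCoeff, degree_eq_sum, prod_fintype _ _ (by simp), ← prod_pow_eq_pow_sum,
    ← prod_div_distrib]

variable [DecidableEq ι]

lemma sum_Iic_prod_eq_prod_sum_Iic {R : Type*} [CommSemiring R] (α : ι →₀ ℕ)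
    (f : ι → ℕ → R) : ∑ β ∈ Iic α, ∏ i, f i (β i) = ∏ i, ∑ b ∈ Iic (α i), f i b := by
  rw [prod_univ_sum]
  refine sum_equiv equivFunOnFinite (fun β => ?_) (fun _ _ => rfl)
  simp [Finsupp.le_def]

lemma expCoeff_add (x y : ℝ) (α : ι →₀ ℕ) :
    expCoeff (x + y) α = ∑ β ∈ Iic α, expCoeff x β * expCoeff y (α - β) := by
  simp only [expCoeff_eq_prod, ← prod_mul_distrib, tsub_apply, add_pow_div_factorial]
  exact (sum_Iic_prod_eq_prod_sum_Iic α fun i b => x ^ b / b ! * (y ^ (α i - b) / (α i - b)!)).symm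

lemma sum_Iio_expCoeff_mul (x y : ℝ) (α : ι →₀ ℕ) :
    ∑ β ∈ Iio α, expCoeff x β * expCoeff y (α - β) = expCoeff (x + y) α - expCoeff x α := by
  rw [expCoeff_add, ← Iio_insert, sum_insert (by simp), tsub_self, expCoeff_zero_right]
  ring

lemma norm_le_expCoeff_of_triangular {𝕜 E : Type*} [RCLike 𝕜] [NormedAddCommGroup E]
    [NormedSpace 𝕜 E] {A C0 : ℝ} (hA : 0 ≤ A) {L : (ι →₀ ℕ) → E → E} {w : (ι →₀ ℕ) → E}
    {α : ι →₀ ℕ} (hL : ∀ γ x, ‖L γ x‖ ≤ expCoeff (A / 2) γ * ‖x‖)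
    (hL0 : ∀ x, ‖L 0 x‖ ≤ C0 * ‖x‖)
    (hrec : (2 : 𝕜) ^ α.degree • w α = ∑ β ∈ Iic α, L (α - β) (w β))
    (hlt : ∀ β < α, ‖w β‖ ≤ expCoeff A β)
    (hgrowth : (3 / 2 : ℝ) ^ α.degree + C0 ≤ 2 ^ α.degree) :
    ‖w α‖ ≤ expCoeff A α := by
  set m := α.degree
  set T := expCoeff A α
  have hlower : ‖∑ β ∈ Iio α, L (α - β) (w β)‖ ≤ ((3 / 2) ^ m - 1) * T := calc
    _ ≤ ∑ β ∈ Iio α, ‖L (α - β) (w β)‖ := norm_sum_le _ _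
    _ ≤ ∑ β ∈ Iio α, expCoeff A β * expCoeff (A / 2) (α - β) := by
      refine sum_le_sum fun β hβ => (hL _ _).trans ?_
      rw [mul_comm]
      gcongr
      exacts [expCoeff_nonneg (by positivity) _, hlt β (mem_Iio.mp hβ)]
    _ = expCoeff (3 / 2 * A) α - T := by
      rw [sum_Iio_expCoeff_mul, show A + A / 2 = 3 / 2 * A by ring]
    _ = ((3 / 2) ^ m - 1) * T := by rw [expCoeff_mul_left]; ring
  have hsplit : (2 : ℝ) ^ m * ‖w α‖ ≤ C0 * ‖w α‖ + ((3 / 2) ^ m - 1) * T := calc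
    (2 : ℝ) ^ m * ‖w α‖ = ‖(2 : 𝕜) ^ m • w α‖ := by simp [norm_smul]
    _ = ‖L 0 (w α) + ∑ β ∈ Iio α, L (α - β) (w β)‖ := by
      rw [hrec, ← Iio_insert, sum_insert (by simp), tsub_self]
    _ ≤ _ := (norm_add_le _ _).trans (add_le_add (hL0 _) hlower)
  have hT : 0 ≤ T := expCoeff_nonneg hA α
  have hpos : 0 < (2 : ℝ) ^ m - C0 := by linarith [pow_pos (by norm_num : (0 : ℝ) < 3 / 2) m]
  refine le_of_mul_le_mul_left ?_ hpos
  nlinarith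

end Fintype

/-- inductive bound `‖w_α‖ ≤ A^{|α|}/α!` for solutions of the
triangular system `2^{|α|} w_α = Σ_{β ≤ α} (D^{α-β}P)(0) w_β`. Here `Pc α`
denotes the normalized derivative `(D^α P)(0)` of the trigonometric polynomial
mask `P`, and the matrix norm is the one subordinate to the vector norm. -/
theorem triangular_system_bound (d r : ℕ) (A C0 : ℝ) (N0 : ℕ)
    (Pc : (Fin d →₀ ℕ) → Matrix (Fin r) (Fin r) ℂ)
    (w : (Fin d →₀ ℕ) → (Fin r → ℂ))
    (hA : 0 < A)
    (hPc : ∀ (α : Fin d →₀ ℕ) (x : Fin r → ℂ),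
      ‖(Pc α) *ᵥ x‖ ≤ ((A / 2) ^ (α.sum fun _ n => n) / ((α.prod fun _ n => n !) : ℝ)) * ‖x‖)
    (hC0 : ∀ x : Fin r → ℂ, ‖(Pc 0) *ᵥ x‖ ≤ C0 * ‖x‖)
    (hN1 : 2⁻¹ ^ N0 * C0 < 1)
    (hN2 : (3 / 4 : ℝ) ^ N0 * (1 - 2⁻¹ ^ N0 * C0)⁻¹ ≤ 1)
    (hrec : ∀ α : Fin d →₀ ℕ,
      ((2 : ℂ) ^ (α.sum fun _ n => n)) • w α = ∑ β ∈ Finset.Iic α, (Pc (α - β)) *ᵥ w β)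
    (hbase : ∀ α : Fin d →₀ ℕ, (α.sum fun _ n => n) ≤ N0 →
      ‖w α‖ ≤ A ^ (α.sum fun _ n => n) / ((α.prod fun _ n => n !) : ℝ)) :
    ∀ α : Fin d →₀ ℕ, ‖w α‖ ≤ A ^ (α.sum fun _ n => n) / ((α.prod fun _ n => n !) : ℝ) := by
  -- The bounds in the statement are `expCoeff` unfolded; `α.sum fun _ n => n` is `α.degree`.
  intro α
  induction α using WellFoundedLT.induction with
  | ind α ih =>
    by_cases hsmall : α.degree ≤ N0
    · exact hbase α hsmall
    exact norm_le_expCoeff_of_triangular hA.le (L := fun γ x => Pc γ *ᵥ x) hPc hC0 (hrec α) ih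
      (three_halves_pow_add_le_two_pow hN1 hN2 (le_of_not_ge hsmall))
end

section
/- Let φ be a compactly supported distribution on ℝ^d with φ̂(0) ≠ 0, and let k be a positive integer. Then the convolution operator q ↦ φ∗q restricted to the space Π_{<k} of polynomials of total degree < k is a linear automorphism of Π_{<k}. -/
open MvPolynomial

/-- The convolution `φ ∗ q` of a compactly supported distribution `φ` (represented
by the linear functional `Λ`, its restriction to polynomials) with the polynomial `q`:
`(φ ∗ q)(x) = ⟨φ(y), q(x - y)⟩`.  We expand `q(x - y)` as a polynomial in `y` (the
outer variables below) with coefficients that are polynomials in `x`, and apply `Λ`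
in the `y`-variable. -/
noncomputable def distribConvPoly (d : ℕ) (Λ : MvPolynomial (Fin d) ℂ →ₗ[ℂ] ℂ)
    (q : MvPolynomial (Fin d) ℂ) : MvPolynomial (Fin d) ℂ :=
  let Q : MvPolynomial (Fin d) (MvPolynomial (Fin d) ℂ) :=
    aeval (fun i => (C (X i) - X i : MvPolynomial (Fin d) (MvPolynomial (Fin d) ℂ))) q
  ∑ m ∈ Q.support, Λ (monomial m 1) • coeff m Q

noncomputable def Qop (d : ℕ) (q : MvPolynomial (Fin d) ℂ) :
    MvPolynomial (Fin d) (MvPolynomial (Fin d) ℂ) :=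
  aeval (fun i => (C (X i) - X i : MvPolynomial (Fin d) (MvPolynomial (Fin d) ℂ))) q

lemma distribConvPoly_eq (d : ℕ) (Λ : MvPolynomial (Fin d) ℂ →ₗ[ℂ] ℂ) (q : MvPolynomial (Fin d) ℂ) :
    distribConvPoly d Λ q = ∑ m ∈ (Qop d q).support, Λ (monomial m 1) • coeff m (Qop d q) := rfl

lemma coeff_zero_Qop (d : ℕ) (q : MvPolynomial (Fin d) ℂ) : coeff 0 (Qop d q) = q := by
  have h : (constantCoeff.comp (aeval (fun i => (C (X i) - X i : MvPolynomial (Fin d) (MvPolynomial (Fin d) ℂ)))).toRingHom :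
      MvPolynomial (Fin d) ℂ →+* MvPolynomial (Fin d) ℂ) = RingHom.id _ := by
    apply ringHom_ext
    · intro a; simp [algebraMap_eq]
    · intro i; simp
  have h2 := RingHom.congr_fun h q
  simpa [Qop, constantCoeff_eq] using h2


lemma Qop_smul_add (d : ℕ) (a : ℂ) (q₁ q₂ : MvPolynomial (Fin d) ℂ) :
    Qop d (a • q₁ + q₂) = a • Qop d q₁ + Qop d q₂ := by
  simp [Qop, map_add, map_smul]

lemma degree_pos_of_ne_zero {d : ℕ} {m : Fin d →₀ ℕ} (h : m ≠ 0) :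
    1 ≤ m.sum fun _ e => e := by
  obtain ⟨j, hj⟩ := Finsupp.support_nonempty_iff.mpr h
  have h1 : 1 ≤ m j := Nat.one_le_iff_ne_zero.mpr (Finsupp.mem_support_iff.mp hj)
  calc 1 ≤ m j := h1
    _ ≤ _ := Finset.single_le_sum (f := fun j => m j) (fun _ _ => Nat.zero_le _) hj

lemma sum_sub_single {d : ℕ} {m : Fin d →₀ ℕ} {i : Fin d} (h : i ∈ m.support) :
    (m - Finsupp.single i 1) + Finsupp.single i 1 = m := by
  have h1 : 1 ≤ m i := Nat.one_le_iff_ne_zero.mpr (Finsupp.mem_support_iff.mp h)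
  ext j
  simp only [Finsupp.add_apply, Finsupp.tsub_apply, Finsupp.single_apply]
  by_cases hj : i = j
  · subst hj; simp; omega
  · simp [hj]

lemma degree_add_single {d : ℕ} (m : Fin d →₀ ℕ) (i : Fin d) :
    ((m + Finsupp.single i 1).sum fun _ e => e) = (m.sum fun _ e => e) + 1 := by
  rw [Finsupp.sum_add_index' (fun _ => rfl) (fun _ _ _ => rfl)]
  simp [Finsupp.sum_single_index]

lemma keyMono (d : ℕ) : ∀ (N : ℕ) (n : Fin d →₀ ℕ), (n.sum fun _ e => e) ≤ N →
    ∀ (a : ℂ) (m : Fin d →₀ ℕ),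
    coeff m (Qop d (monomial n a)) ≠ 0 →
    (coeff m (Qop d (monomial n a))).totalDegree + (m.sum fun _ e => e) ≤ N := by
  intro N
  induction N with
  | zero =>
    intro n hn a m hne
    have hn0 : n = 0 := by
      ext j
      by_contra hj
      have : 1 ≤ n.sum fun _ e => e :=
        degree_pos_of_ne_zero (fun h => hj (by simp [h]))
      omega
    subst hn0
    rw [monomial_zero'] at hne ⊢
    have hC : Qop d (C a) = C (C a) := by simp [Qop, algebraMap_eq]
    rw [hC] at hne ⊢
    rcases eq_or_ne m 0 with hm | hm
    · subst hm; simp [coeff_C]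
    · exfalso; apply hne
      rw [coeff_C, if_neg (fun h => hm h.symm)]
  | succ N ih =>
    intro n hn a m hne
    by_cases hnN : (n.sum fun _ e => e) ≤ N
    · exact (ih n hnN a m hne).trans (Nat.le_succ N)
    · -- n ≠ 0, pick i ∈ n.support
      have hn0 : n ≠ 0 := by
        intro h; subst h; simp [Finsupp.sum_zero_index] at hnN
      obtain ⟨i, hi⟩ := Finsupp.support_nonempty_iff.mpr hn0
      set n' := n - Finsupp.single i 1 with hn'
      have hsum : n' + Finsupp.single i 1 = n := sum_sub_single hi
      have hdeg : (n'.sum fun _ e => e) ≤ N := by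
        have := degree_add_single n' i
        rw [hsum] at this
        omega
      have hmono : monomial n a = monomial n' a * X i := by
        rw [X, monomial_mul, hsum, mul_one]
      set A := Qop d (monomial n' a) with hA
      have hexp : Qop d (monomial n a)
          = A * C (X i) - A * X i := by
        rw [hmono, Qop, map_mul, aeval_X, mul_sub]
        rfl
      have hco : coeff m (Qop d (monomial n a))
          = X i * coeff m A
            - (if i ∈ m.support then coeff (m - Finsupp.single i 1) A else 0) := by
        rw [hexp, coeff_sub, mul_comm A (C (X i)), coeff_C_mul, coeff_mul_X']
      set t₁ := X i * coeff m A with ht₁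
      set t₂ := (if i ∈ m.support then coeff (m - Finsupp.single i 1) A else 0) with ht₂
      have hb1 : t₁ = 0 ∨ t₁.totalDegree + (m.sum fun _ e => e) ≤ N + 1 := by
        by_cases hA0 : coeff m A = 0
        · left; rw [ht₁, hA0, mul_zero]
        · right
          have hih := ih n' hdeg a m hA0
          rw [← hA] at hih
          have : t₁.totalDegree ≤ 1 + (coeff m A).totalDegree :=
            (totalDegree_mul _ _).trans (by simp [totalDegree_X])
          omega
      have hb2 : t₂ = 0 ∨ t₂.totalDegree + (m.sum fun _ e => e) ≤ N + 1 := by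
        by_cases him : i ∈ m.support
        · set m' := m - Finsupp.single i 1 with hm'
          have hmsum : m' + Finsupp.single i 1 = m := sum_sub_single him
          have hmdeg : (m.sum fun _ e => e) = (m'.sum fun _ e => e) + 1 := by
            conv_lhs => rw [← hmsum]
            exact degree_add_single m' i
          have ht₂' : t₂ = coeff m' A := by rw [ht₂, if_pos him]
          by_cases hA0 : coeff m' A = 0
          · left; rw [ht₂', hA0]
          · right
            have hih := ih n' hdeg a m' hA0
            rw [← hA] at hih
            rw [ht₂']
            omega
        · left; rw [ht₂, if_neg him]
      have hmle : (m.sum fun _ e => e) ≤ N + 1 := by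
        rcases hb1 with h1 | h1
        · rcases hb2 with h2 | h2
          · exfalso; apply hne; rw [hco, h1, h2, sub_zero]
          · omega
        · omega
      have hd1 : t₁.totalDegree ≤ N + 1 - (m.sum fun _ e => e) := by
        rcases hb1 with h1 | h1
        · rw [h1]; simp
        · omega
      have hd2 : t₂.totalDegree ≤ N + 1 - (m.sum fun _ e => e) := by
        rcases hb2 with h2 | h2
        · rw [h2]; simp
        · omega
      have : (coeff m (Qop d (monomial n a))).totalDegree ≤ N + 1 - (m.sum fun _ e => e) := by
        rw [hco]
        exact (totalDegree_sub _ _).trans (max_le hd1 hd2)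
      omega

lemma keyQ (d : ℕ) (q : MvPolynomial (Fin d) ℂ) (m : Fin d →₀ ℕ)
    (h : coeff m (Qop d q) ≠ 0) :
    (coeff m (Qop d q)).totalDegree + (m.sum fun _ e => e) ≤ q.totalDegree := by
  have hQ : Qop d q = ∑ n ∈ q.support, Qop d (monomial n (coeff n q)) := by
    conv_lhs => rw [Qop, ← support_sum_monomial_coeff q]
    rw [map_sum]
    rfl
  have hco : coeff m (Qop d q) = ∑ n ∈ q.support, coeff m (Qop d (monomial n (coeff n q))) := by
    rw [hQ, coeff_sum]
  have hterm : ∀ n ∈ q.support,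
      coeff m (Qop d (monomial n (coeff n q))) = 0 ∨
      (coeff m (Qop d (monomial n (coeff n q)))).totalDegree + (m.sum fun _ e => e)
        ≤ q.totalDegree := by
    intro n hns
    by_cases h0 : coeff m (Qop d (monomial n (coeff n q))) = 0
    · exact Or.inl h0
    · exact Or.inr (keyMono d q.totalDegree n (le_totalDegree hns) _ m h0)
  have hmle : (m.sum fun _ e => e) ≤ q.totalDegree := by
    by_contra hc
    apply h
    rw [hco]
    refine Finset.sum_eq_zero fun n hns => ?_
    rcases hterm n hns with h0 | h0
    · exact h0
    · omega
  have hdeg : (coeff m (Qop d q)).totalDegree ≤ q.totalDegree - (m.sum fun _ e => e) := by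
    rw [hco]
    refine totalDegree_finsetSum_le fun n hns => ?_
    rcases hterm n hns with h0 | h0
    · rw [h0]; simp
    · omega
  omega

lemma distribConvPoly_decomp (d : ℕ) (Λ : MvPolynomial (Fin d) ℂ →ₗ[ℂ] ℂ)
    (q : MvPolynomial (Fin d) ℂ) :
    distribConvPoly d Λ q = Λ 1 • q +
      ∑ m ∈ (Qop d q).support.erase 0, Λ (monomial m 1) • coeff m (Qop d q) := by
  rw [distribConvPoly_eq]
  have hmono : (monomial (0 : Fin d →₀ ℕ) (1 : ℂ)) = 1 := by
    rw [monomial_zero']; exact map_one C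
  by_cases h0 : (0 : Fin d →₀ ℕ) ∈ (Qop d q).support
  · rw [← Finset.add_sum_erase _ _ h0, coeff_zero_Qop, hmono]
  · have hq : q = 0 := by rw [← coeff_zero_Qop d q, notMem_support_iff.mp h0]
    rw [Finset.erase_eq_of_notMem h0, hq, smul_zero, zero_add]

lemma L_subset (d : ℕ) (Λ : MvPolynomial (Fin d) ℂ →ₗ[ℂ] ℂ)
    (P : MvPolynomial (Fin d) (MvPolynomial (Fin d) ℂ)) {s : Finset (Fin d →₀ ℕ)}
    (hs : P.support ⊆ s) :
    ∑ m ∈ P.support, Λ (monomial m 1) • coeff m P = ∑ m ∈ s, Λ (monomial m 1) • coeff m P :=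
  Finset.sum_subset hs fun m _ hm => by rw [notMem_support_iff.mp hm, smul_zero]

lemma distribConvPoly_linear (d : ℕ) (Λ : MvPolynomial (Fin d) ℂ →ₗ[ℂ] ℂ) (a : ℂ)
    (q₁ q₂ : MvPolynomial (Fin d) ℂ) :
    distribConvPoly d Λ (a • q₁ + q₂) = a • distribConvPoly d Λ q₁ + distribConvPoly d Λ q₂ := by
  rw [distribConvPoly_eq, distribConvPoly_eq, distribConvPoly_eq, Qop_smul_add]
  have hsub : (a • Qop d q₁ + Qop d q₂).support ⊆ (Qop d q₁).support ∪ (Qop d q₂).support :=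
    support_add.trans (Finset.union_subset_union support_smul (Finset.Subset.refl _))
  rw [L_subset d Λ _ hsub,
      L_subset d Λ (Qop d q₁) Finset.subset_union_left,
      L_subset d Λ (Qop d q₂) Finset.subset_union_right,
      Finset.smul_sum, ← Finset.sum_add_distrib]
  refine Finset.sum_congr rfl fun m _ => ?_
  rw [coeff_add, coeff_smul, smul_add, smul_comm]

lemma residual_le (d : ℕ) (Λ : MvPolynomial (Fin d) ℂ →ₗ[ℂ] ℂ) (q : MvPolynomial (Fin d) ℂ) :
    (∑ m ∈ (Qop d q).support.erase 0, Λ (monomial m 1) • coeff m (Qop d q)).totalDegree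
      ≤ q.totalDegree - 1 := by
  refine totalDegree_finsetSum_le fun m hm => ?_
  have hc := keyQ d q m (mem_support_iff.mp (Finset.mem_of_mem_erase hm))
  have h1 := degree_pos_of_ne_zero (Finset.ne_of_mem_erase hm)
  refine (totalDegree_smul_le _ _).trans ?_
  omega

lemma residual_empty (d : ℕ) (q : MvPolynomial (Fin d) ℂ) (hq : q.totalDegree = 0) :
    (Qop d q).support.erase 0 = ∅ := by
  rw [Finset.eq_empty_iff_forall_notMem]
  intro m hm
  have hc := keyQ d q m (mem_support_iff.mp (Finset.mem_of_mem_erase hm))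
  have := degree_pos_of_ne_zero (Finset.ne_of_mem_erase hm)
  omega

lemma totalDegree_smul_eq {d : ℕ} {c : ℂ} (hc : c ≠ 0) (q : MvPolynomial (Fin d) ℂ) :
    (c • q).totalDegree = q.totalDegree := by
  have h1 := totalDegree_smul_le c q
  have h2 := totalDegree_smul_le c⁻¹ (c • q)
  rw [smul_smul, inv_mul_cancel₀ hc, one_smul] at h2
  omega

lemma distribConvPoly_deg_le (d : ℕ) (Λ : MvPolynomial (Fin d) ℂ →ₗ[ℂ] ℂ)
    (q : MvPolynomial (Fin d) ℂ) :
    (distribConvPoly d Λ q).totalDegree ≤ q.totalDegree := by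
  rw [distribConvPoly_decomp]
  refine (totalDegree_add _ _).trans (max_le ((totalDegree_smul_le _ _)) ?_)
  exact (residual_le d Λ q).trans (Nat.sub_le _ _)

lemma distribConvPoly_inj (d : ℕ) (Λ : MvPolynomial (Fin d) ℂ →ₗ[ℂ] ℂ) (hΛ : Λ 1 ≠ 0)
    (q : MvPolynomial (Fin d) ℂ) (h : distribConvPoly d Λ q = 0) : q = 0 := by
  rw [distribConvPoly_decomp] at h
  by_cases hq : q.totalDegree = 0
  · rw [residual_empty d q hq, Finset.sum_empty, add_zero] at h
    rcases smul_eq_zero.mp h with h' | h'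
    · exact absurd h' hΛ
    · exact h'
  · exfalso
    have hS := residual_le d Λ q
    have heq : Λ 1 • q
        = -(∑ m ∈ (Qop d q).support.erase 0, Λ (monomial m 1) • coeff m (Qop d q)) := by
      exact eq_neg_of_add_eq_zero_left h
    have hd : (Λ 1 • q).totalDegree = q.totalDegree := totalDegree_smul_eq hΛ q
    rw [heq, totalDegree_neg] at hd
    omega

lemma distribConvPoly_zero (d : ℕ) (Λ : MvPolynomial (Fin d) ℂ →ₗ[ℂ] ℂ) :
    distribConvPoly d Λ 0 = 0 := by
  have h := distribConvPoly_linear d Λ 1 0 0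
  simp only [one_smul, add_zero, smul_zero] at h
  exact left_eq_add.mp h
lemma distribConvPoly_surj (d : ℕ) (Λ : MvPolynomial (Fin d) ℂ →ₗ[ℂ] ℂ) (hΛ : Λ 1 ≠ 0) :
    ∀ (N : ℕ) (p : MvPolynomial (Fin d) ℂ), p.totalDegree ≤ N →
      ∃ q, q.totalDegree ≤ N ∧ distribConvPoly d Λ q = p := by
  intro N
  induction N with
  | zero =>
    intro p hp
    refine ⟨(Λ 1)⁻¹ • p, (totalDegree_smul_le _ _).trans hp, ?_⟩
    have hq0 : ((Λ 1)⁻¹ • p).totalDegree = 0 := by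
      have := totalDegree_smul_le (Λ 1)⁻¹ p; omega
    rw [distribConvPoly_decomp, residual_empty d _ hq0, Finset.sum_empty, add_zero,
        smul_smul, mul_inv_cancel₀ hΛ, one_smul]
  | succ N ih =>
    intro p hp
    set q₀ := (Λ 1)⁻¹ • p with hq₀
    have hdq₀ : q₀.totalDegree ≤ N + 1 := (totalDegree_smul_le _ _).trans hp
    set r := ∑ m ∈ (Qop d q₀).support.erase 0, Λ (monomial m 1) • coeff m (Qop d q₀) with hr
    have hT : distribConvPoly d Λ q₀ = p + r := by
      rw [distribConvPoly_decomp, hq₀, smul_smul, mul_inv_cancel₀ hΛ, one_smul, ← hr]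
    have hrd : r.totalDegree ≤ N := (residual_le d Λ q₀).trans (by omega)
    obtain ⟨q₁, hq₁d, hq₁⟩ := ih r hrd
    refine ⟨(-1 : ℂ) • q₁ + q₀, ?_, ?_⟩
    · refine (totalDegree_add _ _).trans (max_le ((totalDegree_smul_le _ _).trans ?_) hdq₀)
      omega
    · rw [distribConvPoly_linear, hq₁, hT, neg_one_smul]
      ring


/-- for a compactly supported distribution `φ` with `φ̂(0) ≠ 0`
(i.e. `Λ 1 ≠ 0`), the convolution operator `q ↦ φ ∗ q` is a linear automorphism
of the space `Π_{<k}` of polynomials of total degree `< k`. -/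
theorem conv_automorphism_of_polynomials (d k : ℕ) (hk : 0 < k)
    (Λ : MvPolynomial (Fin d) ℂ →ₗ[ℂ] ℂ) (hΛ : Λ 1 ≠ 0) :
    (∀ (a : ℂ) (q₁ q₂ : MvPolynomial (Fin d) ℂ),
        distribConvPoly d Λ (a • q₁ + q₂)
          = a • distribConvPoly d Λ q₁ + distribConvPoly d Λ q₂) ∧
    Set.BijOn (distribConvPoly d Λ)
      {q : MvPolynomial (Fin d) ℂ | q.totalDegree < k}
      {q : MvPolynomial (Fin d) ℂ | q.totalDegree < k} := by
  refine ⟨distribConvPoly_linear d Λ, ?_, ?_, ?_⟩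
  · intro q hq
    exact lt_of_le_of_lt (distribConvPoly_deg_le d Λ q) hq
  · intro q₁ _ q₂ _ heq
    have h0 : distribConvPoly d Λ ((-1 : ℂ) • q₂ + q₁) = 0 := by
      rw [distribConvPoly_linear, heq, neg_one_smul]
      ring
    have h1 := distribConvPoly_inj d Λ hΛ _ h0
    rw [neg_one_smul, neg_add_eq_sub] at h1
    exact eq_of_sub_eq_zero h1
  · intro p hp
    have hple : p.totalDegree ≤ k - 1 := by
      have : p.totalDegree < k := hp
      omega
    obtain ⟨q, hqd, hqe⟩ := distribConvPoly_surj d Λ hΛ (k - 1) p hple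
    exact ⟨q, by simpa using lt_of_le_of_lt hqd (by omega : k - 1 < k), hqe⟩
end

section
/- Suppose φ ∈ W₂^s(ℝ^d), k > s, k ≥ 0, and there exists C > 0 and a neighborhood Ω of 0 such that M(ω) := [φ̂,φ̂]⁰_s(ω)/([φ̂,φ̂]_s(ω)·|ω|^{2k−2s}) ≤ C a.e. on Ω. Then for all sufficiently small Ω′ ⊆ Ω, one has [φ̂,φ̂]⁰_t(ω) ≤ 2C·|φ̂(ω)|²·|ω|^{2k} a.e. on Ω′ for every t ≤ s; consequently M_t(ω) := [φ̂,φ̂]⁰_t(ω)/([φ̂,φ̂]_t(ω)·|ω|^{2k−2t}) ≤ 2C a.e. near 0. -/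
/-!
Near the origin every shifted point `ω + α` with `α ≠ 0` has norm at least `1`, so
`[f,f]⁰_t ≤ [f,f]⁰_s` there. The hypothesis `M_s ≤ C` reads
`[f,f]⁰_s ≤ C |ω|^{2k-2s} ([f,f]⁰_s + |f(ω)|² |ω|^{2s})`; once `C |ω|^{2k-2s} ≤ 1/2` the first
summand is absorbed into the left side, leaving `[f,f]⁰_s ≤ 2C |f(ω)|² |ω|^{2k}`.
The absorption needs `[f,f]⁰_s(ω) < ∞` (where it is infinite, `M_s = ∞/∞ = 0` in `ℝ≥0∞`), and this
holds a.e. near `0`: the integral of `[f,f]⁰_s` over the unit ball is the integral of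
`|f|² |·|^{2s}` over the disjoint unit balls around the nonzero lattice points, which the
`W₂^s` norm of `f` controls.
-/

open MeasureTheory Filter Topology
open scoped ENNReal

noncomputable def lattPt (d : ℕ) (a : Fin d → ℤ) : EuclideanSpace ℝ (Fin d) :=
  (EuclideanSpace.equiv (Fin d) ℝ).symm fun i => 2 * Real.pi * (a i : ℝ)

/-- The truncated bracket product `[f,f]⁰_s(ω)`. -/
noncomputable def truncBracket (d : ℕ) (s : ℝ) (f : EuclideanSpace ℝ (Fin d) → ℂ)
    (ω : EuclideanSpace ℝ (Fin d)) : ℝ≥0∞ :=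
  ∑' a : {a : Fin d → ℤ // a ≠ 0},
    (‖f (ω + lattPt d a)‖₊ : ℝ≥0∞) ^ 2 * (‖ω + lattPt d a‖₊ : ℝ≥0∞) ^ (2 * s)

/-- The full bracket product `[f,f]_s(ω) = [f,f]⁰_s(ω) + |f(ω)|² |ω|^{2s}`. -/
noncomputable def fullBracket (d : ℕ) (s : ℝ) (f : EuclideanSpace ℝ (Fin d) → ℂ)
    (ω : EuclideanSpace ℝ (Fin d)) : ℝ≥0∞ :=
  truncBracket d s f ω + (‖f ω‖₊ : ℝ≥0∞) ^ 2 * (‖ω‖₊ : ℝ≥0∞) ^ (2 * s)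


namespace ENNReal

theorem le_two_mul_of_le_inv_two_mul_add {a b : ℝ≥0∞} (ha : a ≠ ⊤) (h : a ≤ 2⁻¹ * a + b) :
    a ≤ 2 * b := by
  have : a / 2 ≤ b := by
    rwa [← sub_half ha, tsub_le_iff_left, ENNReal.div_eq_inv_mul]
  rwa [ENNReal.div_le_iff_le_mul (Or.inl two_ne_zero) (Or.inl ofNat_ne_top), mul_comm] at this

theorem le_two_mul_of_div_add_mul_le {a b c m : ℝ≥0∞} (ha : a ≠ ⊤) (hc0 : c ≠ 0) (hct : c ≠ ⊤)
    (hcm : c * m ≤ 2⁻¹) (h : a / ((a + b) * m) ≤ c) : a ≤ 2 * c * (b * m) := by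
  rw [ENNReal.div_le_iff_le_mul (Or.inr hct) (Or.inr hc0)] at h
  rw [mul_assoc]
  refine le_two_mul_of_le_inv_two_mul_add ha (h.trans ?_)
  calc c * ((a + b) * m) = c * m * a + c * (b * m) := by ring
    _ ≤ 2⁻¹ * a + c * (b * m) := by gcongr

theorem rpow_mul_rpow_le_rpow_mul_rpow {x : ℝ≥0∞} (hx : x ≠ ⊤) {a b c e : ℝ} (hb : 0 < b)
    (habce : a + b = c + e) : x ^ a * x ^ b ≤ x ^ c * x ^ e := by
  rcases eq_or_ne x 0 with rfl | hx0
  -- `0 ^ a` may be `⊤` (for `a < 0`), but `⊤ * 0 = 0`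
  · simp [zero_rpow_of_pos hb]
  · rw [← rpow_add _ _ hx0 hx, ← rpow_add _ _ hx0 hx, habce]

end ENNReal

theorem Real.rpow_le_two_rpow_abs_mul_one_add_rpow {r : ℝ} (hr : 1 ≤ r) (p : ℝ) :
    r ^ p ≤ 2 ^ |p| * (1 + r) ^ p := by
  rcases le_or_gt 0 p with hp | hp
  · calc r ^ p = 1 * r ^ p := (one_mul _).symm
      _ ≤ 2 ^ |p| * (1 + r) ^ p := by
        gcongr
        · exact Real.one_le_rpow one_le_two (abs_nonneg p)
        · linarith
  · have h2r : (2 * r) ^ p ≤ (1 + r) ^ p :=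
      Real.rpow_le_rpow_of_nonpos (by linarith) (by linarith) hp.le
    rw [Real.mul_rpow zero_le_two (by linarith)] at h2r
    calc r ^ p = 2 ^ (-p) * (2 ^ p * r ^ p) := by
          rw [← mul_assoc, ← Real.rpow_add two_pos, neg_add_cancel, Real.rpow_zero, one_mul]
      _ ≤ 2 ^ |p| * (1 + r) ^ p := by
          rw [abs_of_neg hp]
          gcongr

section Lattice

variable {d : ℕ}

theorem lattPt_sub (a b : Fin d → ℤ) : lattPt d a - lattPt d b = lattPt d (a - b) := by
  ext i
  simp [lattPt]
  ring

theorem two_mul_pi_le_norm_lattPt {a : Fin d → ℤ} (ha : a ≠ 0) : 2 * Real.pi ≤ ‖lattPt d a‖ := by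
  obtain ⟨i, hi⟩ := Function.ne_iff.1 ha
  have hcoord : lattPt d a i = 2 * Real.pi * a i := by simp [lattPt]
  have hai : (1 : ℝ) ≤ |(a i : ℝ)| := by
    rw [← Int.cast_abs]
    exact_mod_cast Int.one_le_abs hi
  calc 2 * Real.pi ≤ 2 * Real.pi * |(a i : ℝ)| := le_mul_of_one_le_right (by positivity) hai
    _ = ‖lattPt d a i‖ := by rw [hcoord, Real.norm_eq_abs, abs_mul, abs_of_pos Real.two_pi_pos]
    _ ≤ ‖lattPt d a‖ := PiLp.norm_apply_le _ _

theorem one_le_norm_add_lattPt {a : Fin d → ℤ} (ha : a ≠ 0) {ω : EuclideanSpace ℝ (Fin d)}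
    (hω : ‖ω‖ ≤ 1) : 1 ≤ ‖ω + lattPt d a‖ := by
  have := two_mul_pi_le_norm_lattPt ha
  have := norm_sub_le (ω + lattPt d a) ω
  rw [add_sub_cancel_left] at this
  linarith [Real.pi_gt_three]

theorem pairwise_disjoint_ball_lattPt :
    Pairwise (Function.onFun Disjoint fun a : {a : Fin d → ℤ // a ≠ 0} =>
      Metric.ball (lattPt d a) 1) := by
  intro a b hab
  apply Metric.ball_disjoint_ball
  have := two_mul_pi_le_norm_lattPt (sub_ne_zero_of_ne (Subtype.coe_injective.ne hab))
  rw [← lattPt_sub, ← dist_eq_norm] at this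
  linarith [Real.pi_gt_three]

end Lattice

section Bracket

variable {d : ℕ} {f : EuclideanSpace ℝ (Fin d) → ℂ}

theorem truncBracket_mono_of_norm_le_one {s t : ℝ} (hts : t ≤ s) {ω : EuclideanSpace ℝ (Fin d)}
    (hω : ‖ω‖ ≤ 1) : truncBracket d t f ω ≤ truncBracket d s f ω := by
  refine ENNReal.tsum_le_tsum fun a => mul_le_mul_right ?_ _
  refine ENNReal.rpow_le_rpow_of_exponent_le ?_ (by linarith)
  exact_mod_cast one_le_norm_add_lattPt a.2 hω

theorem measurable_weighted_sq_nnnorm (hf : Measurable f) (s : ℝ) :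
    Measurable fun ξ => (‖f ξ‖₊ : ℝ≥0∞) ^ 2 * (‖ξ‖₊ : ℝ≥0∞) ^ (2 * s) := by
  fun_prop

theorem measurable_truncBracket (hf : Measurable f) (s : ℝ) : Measurable (truncBracket d s f) :=
  Measurable.tsum fun a =>
    (measurable_weighted_sq_nnnorm hf s).comp (measurable_add_const (lattPt d a))

theorem lintegral_ball_truncBracket (hf : Measurable f) (s : ℝ) :
    ∫⁻ ω in Metric.ball 0 1, truncBracket d s f ω
      = ∫⁻ ξ in ⋃ a : {a : Fin d → ℤ // a ≠ 0}, Metric.ball (lattPt d a) 1,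
          (‖f ξ‖₊ : ℝ≥0∞) ^ 2 * (‖ξ‖₊ : ℝ≥0∞) ^ (2 * s) := by
  set g := fun ξ : EuclideanSpace ℝ (Fin d) => (‖f ξ‖₊ : ℝ≥0∞) ^ 2 * (‖ξ‖₊ : ℝ≥0∞) ^ (2 * s)
  have hshift (v : EuclideanSpace ℝ (Fin d)) :
      ∫⁻ ω in Metric.ball 0 1, g (ω + v) = ∫⁻ ξ in Metric.ball v 1, g ξ := by
    have := (measurePreserving_add_right volume v).setLIntegral_comp_preimage_emb
      (measurableEmbedding_addRight v) g (Metric.ball v 1)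
    rwa [Metric.preimage_add_right_ball, sub_self] at this
  calc ∫⁻ ω in Metric.ball 0 1, truncBracket d s f ω
      = ∑' a : {a : Fin d → ℤ // a ≠ 0}, ∫⁻ ω in Metric.ball 0 1, g (ω + lattPt d a) :=
        lintegral_tsum fun a =>
          ((measurable_weighted_sq_nnnorm hf s).comp (measurable_add_const _)).aemeasurable
    _ = _ := by
      rw [lintegral_iUnion (fun _ => measurableSet_ball) pairwise_disjoint_ball_lattPt]
      exact tsum_congr fun a => hshift _

theorem lintegral_ball_truncBracket_lt_top (hf : Measurable f) {s : ℝ}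
    (hf_sobolev : ∫⁻ ξ, ENNReal.ofReal ((1 + ‖ξ‖) ^ (2 * s)) * (‖f ξ‖₊ : ℝ≥0∞) ^ 2 < ⊤) :
    ∫⁻ ω in Metric.ball 0 1, truncBracket d s f ω < ⊤ := by
  have hpoint {ξ : EuclideanSpace ℝ (Fin d)} (hξ : 1 ≤ ‖ξ‖) :
      (‖f ξ‖₊ : ℝ≥0∞) ^ 2 * (‖ξ‖₊ : ℝ≥0∞) ^ (2 * s)
        ≤ ENNReal.ofReal (2 ^ |2 * s|)
          * (ENNReal.ofReal ((1 + ‖ξ‖) ^ (2 * s)) * (‖f ξ‖₊ : ℝ≥0∞) ^ 2) := by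
    calc (‖f ξ‖₊ : ℝ≥0∞) ^ 2 * (‖ξ‖₊ : ℝ≥0∞) ^ (2 * s)
        = (‖f ξ‖₊ : ℝ≥0∞) ^ 2 * ENNReal.ofReal (‖ξ‖ ^ (2 * s)) := by
          congr 1
          rw [← enorm_eq_nnnorm, ← ofReal_norm, ENNReal.ofReal_rpow_of_pos (by linarith)]
      _ ≤ (‖f ξ‖₊ : ℝ≥0∞) ^ 2 * ENNReal.ofReal (2 ^ |2 * s| * (1 + ‖ξ‖) ^ (2 * s)) := by
          gcongr
          exact Real.rpow_le_two_rpow_abs_mul_one_add_rpow hξ _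
      _ = _ := by
          rw [ENNReal.ofReal_mul (by positivity)]
          ring
  rw [lintegral_ball_truncBracket hf]
  calc _ ≤ ∫⁻ ξ, ENNReal.ofReal (2 ^ |2 * s|)
          * (ENNReal.ofReal ((1 + ‖ξ‖) ^ (2 * s)) * (‖f ξ‖₊ : ℝ≥0∞) ^ 2) := by
        refine (setLIntegral_mono' (MeasurableSet.iUnion fun _ => measurableSet_ball)
          fun ξ hξ => ?_).trans (setLIntegral_le_lintegral _ _)
        obtain ⟨a, ha⟩ := Set.mem_iUnion.1 hξ
        have := one_le_norm_add_lattPt a.2 (ω := ξ - lattPt d a)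
          (by rw [← dist_eq_norm]; exact (Metric.mem_ball.1 ha).le)
        rw [sub_add_cancel] at this
        exact hpoint this
    _ = ENNReal.ofReal (2 ^ |2 * s|)
          * ∫⁻ ξ, ENNReal.ofReal ((1 + ‖ξ‖) ^ (2 * s)) * (‖f ξ‖₊ : ℝ≥0∞) ^ 2 :=
        lintegral_const_mul' _ _ ENNReal.ofReal_ne_top
    _ < ⊤ := ENNReal.mul_lt_top ENNReal.ofReal_lt_top hf_sobolev

theorem ae_truncBracket_lt_top (hf : Measurable f) {s : ℝ}
    (hf_sobolev : ∫⁻ ξ, ENNReal.ofReal ((1 + ‖ξ‖) ^ (2 * s)) * (‖f ξ‖₊ : ℝ≥0∞) ^ 2 < ⊤) :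
    ∀ᵐ ω, ω ∈ Metric.ball 0 1 → truncBracket d s f ω < ⊤ := by
  have := ae_lt_top (measurable_truncBracket hf s)
    (lintegral_ball_truncBracket_lt_top hf hf_sobolev).ne
  rwa [ae_restrict_iff' measurableSet_ball] at this

end Bracket

theorem eventually_ofReal_mul_nnnorm_rpow_lt {E : Type*} [NormedAddCommGroup E] (C : ℝ) {p : ℝ}
    (hp : 0 < p) {ε : ℝ≥0∞} (hε : 0 < ε) :
    ∀ᶠ x in 𝓝 (0 : E), ENNReal.ofReal C * (‖x‖₊ : ℝ≥0∞) ^ p < ε := by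
  have hcont : Continuous fun x : E => ENNReal.ofReal C * (‖x‖₊ : ℝ≥0∞) ^ p :=
    (ENNReal.continuous_const_mul ENNReal.ofReal_ne_top).comp
      ((ENNReal.continuous_rpow_const).comp (ENNReal.continuous_coe.comp continuous_nnnorm))
  have := hcont.tendsto 0
  simp only [nnnorm_zero, ENNReal.coe_zero, ENNReal.zero_rpow_of_pos hp, mul_zero] at this
  exact this.eventually_lt_const hε

theorem approx_order_persists_in_smaller_smoothness_general (d : ℕ) (s t k C : ℝ)
    (hts : t ≤ s) (hsk : s < k) (hC : 0 < C)
    (φhat : EuclideanSpace ℝ (Fin d) → ℂ) (hmeas : Measurable φhat)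
    (hφ : ∫⁻ ξ, ENNReal.ofReal ((1 + ‖ξ‖) ^ (2 * s)) * (‖φhat ξ‖₊ : ℝ≥0∞) ^ 2 < ⊤)
    (Ω : Set (EuclideanSpace ℝ (Fin d))) (hΩ : Ω ∈ nhds (0 : EuclideanSpace ℝ (Fin d)))
    (hM : ∀ᵐ ω ∂volume, ω ∈ Ω →
      truncBracket d s φhat ω
          / (fullBracket d s φhat ω * (‖ω‖₊ : ℝ≥0∞) ^ (2 * k - 2 * s))
        ≤ ENNReal.ofReal C) :
    ∃ Ω' ∈ nhds (0 : EuclideanSpace ℝ (Fin d)), Ω' ⊆ Ω ∧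
      (∀ᵐ ω ∂volume, ω ∈ Ω' →
        truncBracket d t φhat ω
          ≤ ENNReal.ofReal (2 * C) * (‖φhat ω‖₊ : ℝ≥0∞) ^ 2 * (‖ω‖₊ : ℝ≥0∞) ^ (2 * k)) ∧
      (∀ᵐ ω ∂volume, ω ∈ Ω' →
        truncBracket d t φhat ω
            / (fullBracket d t φhat ω * (‖ω‖₊ : ℝ≥0∞) ^ (2 * k - 2 * t))
          ≤ ENNReal.ofReal (2 * C)) := by
  have hP : 0 < 2 * k - 2 * s := by linarith
  have h2C : ENNReal.ofReal (2 * C) = 2 * ENNReal.ofReal C := by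
    rw [ENNReal.ofReal_mul zero_le_two, ENNReal.ofReal_ofNat]
  set Ω' := Ω ∩ Metric.ball 0 1
    ∩ {ω | ENNReal.ofReal C * (‖ω‖₊ : ℝ≥0∞) ^ (2 * k - 2 * s) < 2⁻¹}
  have hΩ' : Ω' ∈ 𝓝 0 := inter_mem (inter_mem hΩ (Metric.ball_mem_nhds 0 one_pos))
    (eventually_ofReal_mul_nnnorm_rpow_lt C hP (by norm_num))
  have hbound : ∀ᵐ ω, ω ∈ Ω' →
      truncBracket d t φhat ω ≤ ENNReal.ofReal (2 * C) * (‖φhat ω‖₊ : ℝ≥0∞) ^ 2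
        * ((‖ω‖₊ : ℝ≥0∞) ^ (2 * s) * (‖ω‖₊ : ℝ≥0∞) ^ (2 * k - 2 * s)) := by
    filter_upwards [hM, ae_truncBracket_lt_top hmeas hφ] with ω hMω hfin
    rintro ⟨⟨hωΩ, hωball⟩, hsmall⟩
    calc truncBracket d t φhat ω ≤ truncBracket d s φhat ω :=
          truncBracket_mono_of_norm_le_one hts (mem_ball_zero_iff.1 hωball).le
      _ ≤ _ := (ENNReal.le_two_mul_of_div_add_mul_le (hfin hωball).ne
            (ENNReal.ofReal_pos.2 hC).ne' ENNReal.ofReal_ne_top hsmall.le (hMω hωΩ)).trans_eq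
          (by rw [h2C]; ring)
  refine ⟨Ω', hΩ', fun ω hω => hω.1.1, hbound.mono fun ω h hω => (h hω).trans ?_,
    hbound.mono fun ω h hω => ENNReal.div_le_of_le_mul ((h hω).trans ?_)⟩
  · gcongr _ * ?_
    simpa using ENNReal.rpow_mul_rpow_le_rpow_mul_rpow ENNReal.coe_ne_top hP
      (c := 2 * k) (e := 0) (by ring)
  · calc _ ≤ ENNReal.ofReal (2 * C) * (‖φhat ω‖₊ : ℝ≥0∞) ^ 2
          * ((‖ω‖₊ : ℝ≥0∞) ^ (2 * t) * (‖ω‖₊ : ℝ≥0∞) ^ (2 * k - 2 * t)) := by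
          gcongr _ * ?_
          exact ENNReal.rpow_mul_rpow_le_rpow_mul_rpow ENNReal.coe_ne_top hP (by ring)
      _ ≤ ENNReal.ofReal (2 * C) * (fullBracket d t φhat ω * (‖ω‖₊ : ℝ≥0∞) ^ (2 * k - 2 * t)) := by
          rw [mul_assoc, ← mul_assoc ((‖φhat ω‖₊ : ℝ≥0∞) ^ 2)]
          gcongr
          exact le_add_self

/-- if `M_s = [φ̂,φ̂]⁰_s/([φ̂,φ̂]_s |·|^{2k-2s}) ≤ C` a.e. on a
neighborhood `Ω` of the origin, then on a smaller neighborhood `Ω'` one has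
`[φ̂,φ̂]⁰_t ≤ 2C |φ̂|² |·|^{2k}` a.e. for every `t ≤ s`, and consequently
`M_t ≤ 2C` a.e. there. -/
theorem approx_order_persists_in_smaller_smoothness (d : ℕ) (s t k C : ℝ)
    (hts : t ≤ s) (hsk : s < k) (hk : 0 ≤ k) (hC : 0 < C)
    (φhat : EuclideanSpace ℝ (Fin d) → ℂ) (hmeas : Measurable φhat)
    (hφ : ∫⁻ ξ, ENNReal.ofReal ((1 + ‖ξ‖) ^ (2 * s)) * (‖φhat ξ‖₊ : ℝ≥0∞) ^ 2 < ⊤)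
    (Ω : Set (EuclideanSpace ℝ (Fin d))) (hΩ : Ω ∈ nhds (0 : EuclideanSpace ℝ (Fin d)))
    (hM : ∀ᵐ ω ∂volume, ω ∈ Ω →
      truncBracket d s φhat ω
          / (fullBracket d s φhat ω * (‖ω‖₊ : ℝ≥0∞) ^ (2 * k - 2 * s))
        ≤ ENNReal.ofReal C) :
    ∃ Ω' ∈ nhds (0 : EuclideanSpace ℝ (Fin d)), Ω' ⊆ Ω ∧
      (∀ᵐ ω ∂volume, ω ∈ Ω' →
        truncBracket d t φhat ω
          ≤ ENNReal.ofReal (2 * C) * (‖φhat ω‖₊ : ℝ≥0∞) ^ 2 * (‖ω‖₊ : ℝ≥0∞) ^ (2 * k)) ∧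
      (∀ᵐ ω ∂volume, ω ∈ Ω' →
        truncBracket d t φhat ω
            / (fullBracket d t φhat ω * (‖ω‖₊ : ℝ≥0∞) ^ (2 * k - 2 * t))
          ≤ ENNReal.ofReal (2 * C)) :=
  approx_order_persists_in_smaller_smoothness_general d s t k C hts hsk hC φhat hmeas hφ Ω hΩ hM
end

section
/- Let φ₁ ∈ W₂^{s₁}(ℝ^d) and φ₂ ∈ W₂^{s₂}(ℝ^d) be measurable functions such that [φ̂ᵢ,φ̂ᵢ]⁰_{sᵢ}(ω)/|φ̂ᵢ(ω)|² = O(|ω|^{2kᵢ}) a.e. near the origin, i = 1,2. Set ψ̂ := φ̂₁·φ̂₂. Then [ψ̂,ψ̂]⁰_{s₁+s₂}(ω)/(|ψ̂(ω)|²|ω|^{2s₁+2s₂}) = O(|ω|^{2(k₁+k₂)−2(s₁+s₂)}) a.e. near the origin. -/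
open MeasureTheory
open scoped ENNReal

/-! Off the lattice `2πℤ^d` each weight `|ω + α|^{2(s₁+s₂)}` splits as
`|ω + α|^{2s₁} |ω + α|^{2s₂}`, so the bracket of `f g` is a sum of products of the terms of the
brackets of `f` and `g`, hence `[f g, f g]⁰_{s₁+s₂} ≤ [f,f]⁰_{s₁} [g,g]⁰_{s₂}`. Multiplying the
hypotheses `[f,f]⁰_{s₁} ≤ C₁ |ω|^{2k₁} |f(ω)|²` and `[g,g]⁰_{s₂} ≤ C₂ |ω|^{2k₂} |g(ω)|²` gives the
claim off the lattice, which is a null set once `d ≥ 1`; for `d = 0` the bracket is an empty sum. -/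

@[simp]
lemma lattPt_zero (d : ℕ) : lattPt d 0 = 0 := by
  ext i
  simp [lattPt]

lemma ae_forall_add_lattPt_ne_zero (d : ℕ) [NeZero d] :
    ∀ᵐ ω : EuclideanSpace ℝ (Fin d) ∂volume, ∀ a, ω + lattPt d a ≠ 0 := by
  filter_upwards [(Set.countable_range fun a => -lattPt d a).ae_notMem volume] with ω hω a
  rw [Ne, add_eq_zero_iff_eq_neg]
  exact fun h => hω ⟨a, h.symm⟩

lemma truncBracket_of_eq_zero {d : ℕ} (hd : d = 0) (s : ℝ) (f : EuclideanSpace ℝ (Fin d) → ℂ)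
    (ω : EuclideanSpace ℝ (Fin d)) : truncBracket d s f ω = 0 := by
  subst hd
  have : IsEmpty {a : Fin 0 → ℤ // a ≠ 0} := ⟨fun a => a.2 (Subsingleton.elim _ _)⟩
  exact tsum_empty

lemma ENNReal.tsum_mul_le_tsum_mul_tsum {ι : Type*} (x y : ι → ℝ≥0∞) :
    ∑' i, x i * y i ≤ (∑' i, x i) * ∑' i, y i := by
  rw [← ENNReal.tsum_mul_right]
  exact ENNReal.tsum_le_tsum fun i => mul_le_mul_right (ENNReal.le_tsum i) _

lemma truncBracket_mul_le {d : ℕ} (s₁ s₂ : ℝ) (f g : EuclideanSpace ℝ (Fin d) → ℂ)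
    {ω : EuclideanSpace ℝ (Fin d)} (hω : ∀ a, ω + lattPt d a ≠ 0) :
    truncBracket d (s₁ + s₂) (fun x => f x * g x) ω
      ≤ truncBracket d s₁ f ω * truncBracket d s₂ g ω := by
  refine le_of_eq_of_le (tsum_congr fun a => ?_) (ENNReal.tsum_mul_le_tsum_mul_tsum _ _)
  have hr : (‖ω + lattPt d a‖₊ : ℝ≥0∞) ≠ 0 := by simpa using hω a
  rw [mul_add, ENNReal.rpow_add _ _ hr ENNReal.coe_ne_top, nnnorm_mul, ENNReal.coe_mul]
  ring

lemma truncBracket_mul_div_le {d : ℕ} {s₁ s₂ k₁ k₂ : ℝ} {c₁ c₂ : ℝ≥0∞} (hc₁ : c₁ ≠ ⊤)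
    (hc₂ : c₂ ≠ ⊤) {f g : EuclideanSpace ℝ (Fin d) → ℂ} {ω : EuclideanSpace ℝ (Fin d)}
    (hω : ∀ a, ω + lattPt d a ≠ 0)
    (h₁ : truncBracket d s₁ f ω / (‖f ω‖₊ : ℝ≥0∞) ^ 2 ≤ c₁ * (‖ω‖₊ : ℝ≥0∞) ^ (2 * k₁))
    (h₂ : truncBracket d s₂ g ω / (‖g ω‖₊ : ℝ≥0∞) ^ 2 ≤ c₂ * (‖ω‖₊ : ℝ≥0∞) ^ (2 * k₂)) :
    truncBracket d (s₁ + s₂) (fun x => f x * g x) ω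
        / ((‖f ω * g ω‖₊ : ℝ≥0∞) ^ 2 * (‖ω‖₊ : ℝ≥0∞) ^ (2 * s₁ + 2 * s₂))
      ≤ c₁ * c₂ * (‖ω‖₊ : ℝ≥0∞) ^ (2 * (k₁ + k₂) - 2 * (s₁ + s₂)) := by
  set r : ℝ≥0∞ := (‖ω‖₊ : ℝ≥0∞)
  have hr : r ≠ 0 := by simpa [r] using hω 0
  have hr' : r ≠ ⊤ := ENNReal.coe_ne_top
  have hM (c : ℝ≥0∞) (hc : c ≠ ⊤) (k : ℝ) : c * r ^ (2 * k) ≠ ⊤ :=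
    ENNReal.mul_ne_top hc (ENNReal.rpow_ne_top_of_ne_zero hr hr')
  have hB (z : ℂ) : (‖z‖₊ : ℝ≥0∞) ^ 2 ≠ ⊤ := ENNReal.pow_ne_top ENNReal.coe_ne_top
  have hT₁ := (ENNReal.div_le_iff_le_mul (.inr (hM c₁ hc₁ k₁)) (.inl (hB _))).1 h₁
  have hT₂ := (ENNReal.div_le_iff_le_mul (.inr (hM c₂ hc₂ k₂)) (.inl (hB _))).1 h₂
  have hexp : r ^ (2 * k₁) * r ^ (2 * k₂)
      = r ^ (2 * (k₁ + k₂) - 2 * (s₁ + s₂)) * r ^ (2 * s₁ + 2 * s₂) := by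
    rw [← ENNReal.rpow_add _ _ hr hr', ← ENNReal.rpow_add _ _ hr hr']
    ring_nf
  refine ENNReal.div_le_of_le_mul ?_
  calc truncBracket d (s₁ + s₂) (fun x => f x * g x) ω
      ≤ truncBracket d s₁ f ω * truncBracket d s₂ g ω := truncBracket_mul_le s₁ s₂ f g hω
    _ ≤ c₁ * r ^ (2 * k₁) * (‖f ω‖₊ : ℝ≥0∞) ^ 2 * (c₂ * r ^ (2 * k₂) * (‖g ω‖₊ : ℝ≥0∞) ^ 2) :=
      mul_le_mul' hT₁ hT₂
    _ = c₁ * c₂ * r ^ (2 * (k₁ + k₂) - 2 * (s₁ + s₂))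
          * ((‖f ω * g ω‖₊ : ℝ≥0∞) ^ 2 * r ^ (2 * s₁ + 2 * s₂)) := by
      rw [nnnorm_mul, ENNReal.coe_mul, mul_pow]
      calc _ = c₁ * c₂ * (r ^ (2 * k₁) * r ^ (2 * k₂))
              * ((‖f ω‖₊ : ℝ≥0∞) ^ 2 * (‖g ω‖₊ : ℝ≥0∞) ^ 2) := by ring
        _ = _ := by rw [hexp]; ring

theorem conv_provides_sum_of_orders_general (d : ℕ) (s₁ s₂ k₁ k₂ C₁ C₂ : ℝ)
    (φ1 φ2 : EuclideanSpace ℝ (Fin d) → ℂ)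
    (U₁ : Set (EuclideanSpace ℝ (Fin d))) (hU₁ : U₁ ∈ nhds (0 : EuclideanSpace ℝ (Fin d)))
    (h1 : ∀ᵐ ω ∂volume, ω ∈ U₁ →
      truncBracket d s₁ φ1 ω / (‖φ1 ω‖₊ : ℝ≥0∞) ^ 2
        ≤ ENNReal.ofReal C₁ * (‖ω‖₊ : ℝ≥0∞) ^ (2 * k₁))
    (U₂ : Set (EuclideanSpace ℝ (Fin d))) (hU₂ : U₂ ∈ nhds (0 : EuclideanSpace ℝ (Fin d)))
    (h2 : ∀ᵐ ω ∂volume, ω ∈ U₂ →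
      truncBracket d s₂ φ2 ω / (‖φ2 ω‖₊ : ℝ≥0∞) ^ 2
        ≤ ENNReal.ofReal C₂ * (‖ω‖₊ : ℝ≥0∞) ^ (2 * k₂)) :
    ∃ C : ℝ, 0 ≤ C ∧ ∃ U ∈ nhds (0 : EuclideanSpace ℝ (Fin d)),
      ∀ᵐ ω ∂volume, ω ∈ U →
        truncBracket d (s₁ + s₂) (fun x => φ1 x * φ2 x) ω
            / ((‖φ1 ω * φ2 ω‖₊ : ℝ≥0∞) ^ 2 * (‖ω‖₊ : ℝ≥0∞) ^ (2 * s₁ + 2 * s₂))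
          ≤ ENNReal.ofReal C
              * (‖ω‖₊ : ℝ≥0∞) ^ (2 * (k₁ + k₂) - 2 * (s₁ + s₂)) := by
  rcases eq_or_ne d 0 with hd | hd
  · refine ⟨0, le_rfl, Set.univ, Filter.univ_mem, .of_forall fun ω _ => ?_⟩
    simp [truncBracket_of_eq_zero hd]
  have : NeZero d := ⟨hd⟩
  refine ⟨(ENNReal.ofReal C₁ * ENNReal.ofReal C₂).toReal, ENNReal.toReal_nonneg, U₁ ∩ U₂,
    Filter.inter_mem hU₁ hU₂, ?_⟩
  filter_upwards [h1, h2, ae_forall_add_lattPt_ne_zero d] with ω hω₁ hω₂ hω hU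
  rw [ENNReal.ofReal_toReal (ENNReal.mul_ne_top ENNReal.ofReal_ne_top ENNReal.ofReal_ne_top)]
  exact truncBracket_mul_div_le ENNReal.ofReal_ne_top ENNReal.ofReal_ne_top hω
    (hω₁ hU.1) (hω₂ hU.2)

/-- if `[φ̂ᵢ,φ̂ᵢ]⁰_{sᵢ}/|φ̂ᵢ|² = O(|·|^{2kᵢ})` a.e. near `0` for
`i = 1,2`, then `ψ̂ := φ̂₁ φ̂₂` satisfies
`[ψ̂,ψ̂]⁰_{s₁+s₂}/(|ψ̂|² |·|^{2s₁+2s₂}) = O(|·|^{2(k₁+k₂)−2(s₁+s₂)})` a.e. near `0`. -/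
theorem conv_provides_sum_of_orders (d : ℕ) (s₁ s₂ k₁ k₂ C₁ C₂ : ℝ)
    (φ1 φ2 : EuclideanSpace ℝ (Fin d) → ℂ)
    (hm1 : Measurable φ1) (hm2 : Measurable φ2)
    (hW1 : ∫⁻ ξ, ENNReal.ofReal ((1 + ‖ξ‖) ^ (2 * s₁)) * (‖φ1 ξ‖₊ : ℝ≥0∞) ^ 2 < ⊤)
    (hW2 : ∫⁻ ξ, ENNReal.ofReal ((1 + ‖ξ‖) ^ (2 * s₂)) * (‖φ2 ξ‖₊ : ℝ≥0∞) ^ 2 < ⊤)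
    (U₁ : Set (EuclideanSpace ℝ (Fin d))) (hU₁ : U₁ ∈ nhds (0 : EuclideanSpace ℝ (Fin d)))
    (h1 : ∀ᵐ ω ∂volume, ω ∈ U₁ →
      truncBracket d s₁ φ1 ω / (‖φ1 ω‖₊ : ℝ≥0∞) ^ 2
        ≤ ENNReal.ofReal C₁ * (‖ω‖₊ : ℝ≥0∞) ^ (2 * k₁))
    (U₂ : Set (EuclideanSpace ℝ (Fin d))) (hU₂ : U₂ ∈ nhds (0 : EuclideanSpace ℝ (Fin d)))
    (h2 : ∀ᵐ ω ∂volume, ω ∈ U₂ →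
      truncBracket d s₂ φ2 ω / (‖φ2 ω‖₊ : ℝ≥0∞) ^ 2
        ≤ ENNReal.ofReal C₂ * (‖ω‖₊ : ℝ≥0∞) ^ (2 * k₂)) :
    ∃ C : ℝ, 0 ≤ C ∧ ∃ U ∈ nhds (0 : EuclideanSpace ℝ (Fin d)),
      ∀ᵐ ω ∂volume, ω ∈ U →
        truncBracket d (s₁ + s₂) (fun x => φ1 x * φ2 x) ω
            / ((‖φ1 ω * φ2 ω‖₊ : ℝ≥0∞) ^ 2 * (‖ω‖₊ : ℝ≥0∞) ^ (2 * s₁ + 2 * s₂))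
          ≤ ENNReal.ofReal C
              * (‖ω‖₊ : ℝ≥0∞) ^ (2 * (k₁ + k₂) - 2 * (s₁ + s₂)) :=
  conv_provides_sum_of_orders_general d s₁ s₂ k₁ k₂ C₁ C₂ φ1 φ2 U₁ hU₁ h1 U₂ hU₂ h2
end

section
/- Let Φ be a finite vector of functions with Φ̂ bounded near 0, let G⁰(ω) := Σ_{α∈2πℤ^d\{0}} Φ̂(ω+α)Φ̂(ω+α)*|ω+α|^{2s} and G := G⁰ + Φ̂Φ̂*|·|^{2s}. Suppose there exists C>0 such that inf_{v≠0} (v*G⁰v)/(v*Gv) ≤ C|ω|^{2k−2s} a.e. near 0, with k > s. Then there exist constants c, C′ > 0 and a neighborhood of 0 on which inf_{v≠0}(v*G⁰v)/(v*Gv) ≥ c·|ω|^{−2s}·ρ_min(G⁰(ω)), and hence ρ_min(G⁰(ω)) ≤ C′|ω|^{2k} a.e. near 0. -/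
open MeasureTheory Matrix
open scoped ENNReal

/-- The quadratic form `v ↦ v* M v` (real part). -/
noncomputable def qForm (r : ℕ) (M : Matrix (Fin r) (Fin r) ℂ) (v : Fin r → ℂ) : ℝ :=
  (star v ⬝ᵥ (M *ᵥ v)).re

/-- The smallest eigenvalue of a Hermitian matrix, as the infimum of its Rayleigh
quotient over (Euclidean-)normalized vectors. -/
noncomputable def rhoMin (r : ℕ) (M : Matrix (Fin r) (Fin r) ℂ) : ℝ :=
  ⨅ v : {v : Fin r → ℂ // ∑ i, ‖v i‖ ^ 2 = 1}, qForm r M v.1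

/-- `inf_{v ≠ 0} (v* N v)/(v* M v)`. -/
noncomputable def infRatio (r : ℕ) (M N : Matrix (Fin r) (Fin r) ℂ) : ℝ :=
  ⨅ v : {v : Fin r → ℂ // v ≠ 0}, qForm r N v.1 / qForm r M v.1

/-- The truncated Gramian `G⁰(ω) = Σ_{α ∈ 2πℤ^d\0} Φ̂(ω+α) Φ̂(ω+α)* |ω+α|^{2s}`. -/
noncomputable def truncGramian (d r : ℕ) (s : ℝ) (Φ : EuclideanSpace ℝ (Fin d) → (Fin r → ℂ))
    (ω : EuclideanSpace ℝ (Fin d)) : Matrix (Fin r) (Fin r) ℂ :=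
  ∑' a : {a : Fin d → ℤ // a ≠ 0},
    (‖ω + lattPt d a‖ ^ (2 * s) : ℝ) •
      vecMulVec (Φ (ω + lattPt d a)) (star (Φ (ω + lattPt d a)))

/-- The full Gramian `G = G⁰ + Φ̂ Φ̂* |·|^{2s}`. -/
noncomputable def fullGramian (d r : ℕ) (s : ℝ) (Φ : EuclideanSpace ℝ (Fin d) → (Fin r → ℂ))
    (ω : EuclideanSpace ℝ (Fin d)) : Matrix (Fin r) (Fin r) ℂ :=
  truncGramian d r s Φ ω + (‖ω‖ ^ (2 * s) : ℝ) • vecMulVec (Φ ω) (star (Φ ω))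

/- ### auxiliary lemmas -/

lemma qForm_add (r : ℕ) (M N : Matrix (Fin r) (Fin r) ℂ) (v : Fin r → ℂ) :
    qForm r (M + N) v = qForm r M v + qForm r N v := by
  simp [qForm, Matrix.add_mulVec, dotProduct_add]

lemma qForm_smul_vecMulVec (r : ℕ) (c : ℝ) (u v : Fin r → ℂ) :
    qForm r (c • vecMulVec u (star u)) v = c * Complex.normSq (star u ⬝ᵥ v) := by
  unfold qForm
  set z := star u ⬝ᵥ v with hz
  have h1 : vecMulVec u (star u) *ᵥ v = fun i => u i * z := by
    ext i
    simp [Matrix.mulVec, dotProduct, vecMulVec_apply, Finset.mul_sum, mul_assoc, hz]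
  have h2 : star v ⬝ᵥ (vecMulVec u (star u) *ᵥ v) = (starRingEnd ℂ) z * z := by
    rw [h1, hz]
    simp only [dotProduct, Pi.star_apply, RCLike.star_def, map_sum, Finset.sum_mul]
    apply Finset.sum_congr rfl
    intro i _
    simp only [_root_.map_mul, Complex.conj_conj]
    ring
  rw [Matrix.smul_mulVec, dotProduct_smul, Complex.smul_re, h2]
  rw [mul_comm ((starRingEnd ℂ) z) z, Complex.mul_conj]
  simp

/-- `qForm` commutes with `tsum` of a summable family of matrices. -/
lemma qForm_tsum {ι : Type*} (r : ℕ) (f : ι → Matrix (Fin r) (Fin r) ℂ)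
    (hf : Summable f) (v : Fin r → ℂ) :
    qForm r (∑' a, f a) v = ∑' a, qForm r (f a) v := by
  let L : Matrix (Fin r) (Fin r) ℂ →ₗ[ℝ] ℝ :=
    { toFun := fun M => (star v ⬝ᵥ (M *ᵥ v)).re
      map_add' := fun M N => by simp [Matrix.add_mulVec, dotProduct_add]
      map_smul' := fun c M => by
        simp [Matrix.smul_mulVec, dotProduct_smul, Complex.smul_re] }
  exact (LinearMap.toContinuousLinearMap L).map_tsum hf

lemma qForm_smul_vec (r : ℕ) (M : Matrix (Fin r) (Fin r) ℂ) (c : ℝ) (v : Fin r → ℂ) :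
    qForm r M ((c : ℂ) • v) = c ^ 2 * qForm r M v := by
  unfold qForm
  rw [Matrix.mulVec_smul, star_smul, smul_dotProduct, dotProduct_smul]
  simp only [star_trivial, Complex.star_def, Complex.conj_ofReal, smul_eq_mul, ← mul_assoc]
  rw [← Complex.ofReal_mul, Complex.re_ofReal_mul]
  ring

lemma qForm_trunc_nonneg (d r : ℕ) (s : ℝ) (Φ : EuclideanSpace ℝ (Fin d) → (Fin r → ℂ))
    (hsum : ∀ ω : EuclideanSpace ℝ (Fin d),
      Summable fun a : {a : Fin d → ℤ // a ≠ 0} =>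
        (‖ω + lattPt d a‖ ^ (2 * s) : ℝ) •
          vecMulVec (Φ (ω + lattPt d a)) (star (Φ (ω + lattPt d a))))
    (ω : EuclideanSpace ℝ (Fin d)) (v : Fin r → ℂ) :
    0 ≤ qForm r (truncGramian d r s Φ ω) v := by
  rw [truncGramian, qForm_tsum r _ (hsum ω) v]
  refine tsum_nonneg fun a => ?_
  rw [qForm_smul_vecMulVec]
  exact mul_nonneg (Real.rpow_nonneg (norm_nonneg _) _) (Complex.normSq_nonneg _)

lemma rhoMin_nonneg (d r : ℕ) (s : ℝ) (Φ : EuclideanSpace ℝ (Fin d) → (Fin r → ℂ))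
    (hsum : ∀ ω : EuclideanSpace ℝ (Fin d),
      Summable fun a : {a : Fin d → ℤ // a ≠ 0} =>
        (‖ω + lattPt d a‖ ^ (2 * s) : ℝ) •
          vecMulVec (Φ (ω + lattPt d a)) (star (Φ (ω + lattPt d a))))
    (ω : EuclideanSpace ℝ (Fin d)) :
    0 ≤ rhoMin r (truncGramian d r s Φ ω) := by
  unfold rhoMin
  exact Real.iInf_nonneg fun v => qForm_trunc_nonneg d r s Φ hsum ω v.1

set_option maxHeartbeats 1000000 in
/-- if `Φ̂` is bounded near `0` and
`inf_v (v*G⁰v)/(v*Gv) ≤ C |ω|^{2k-2s}` a.e. near `0` (with `k > s`), then near `0`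
the infimum is bounded below by `c |ω|^{-2s} ρ_min(G⁰(ω))`, and consequently
`ρ_min(G⁰(ω)) ≤ C' |ω|^{2k}` a.e. near `0`. -/
theorem rhoMin_upper_bound_of_approx_order (d r : ℕ) (s k : ℝ) (hsk : s < k) (hk : 0 ≤ k)
    (Φ : EuclideanSpace ℝ (Fin d) → (Fin r → ℂ))
    (hmeas : ∀ i, Measurable fun ω => Φ ω i)
    (hsum : ∀ ω : EuclideanSpace ℝ (Fin d),
      Summable fun a : {a : Fin d → ℤ // a ≠ 0} =>
        (‖ω + lattPt d a‖ ^ (2 * s) : ℝ) •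
          vecMulVec (Φ (ω + lattPt d a)) (star (Φ (ω + lattPt d a))))
    (M : ℝ) (U₀ : Set (EuclideanSpace ℝ (Fin d)))
    (hU₀ : U₀ ∈ nhds (0 : EuclideanSpace ℝ (Fin d)))
    (hbdd : ∀ ω ∈ U₀, ∀ i, ‖Φ ω i‖ ≤ M)
    (C : ℝ) (hC : 0 < C) (U : Set (EuclideanSpace ℝ (Fin d)))
    (hU : U ∈ nhds (0 : EuclideanSpace ℝ (Fin d)))
    (hupper : ∀ᵐ ω ∂volume, ω ∈ U →
      infRatio r (fullGramian d r s Φ ω) (truncGramian d r s Φ ω)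
        ≤ C * ‖ω‖ ^ (2 * k - 2 * s)) :
    ∃ c C' : ℝ, 0 < c ∧ 0 < C' ∧
      ∃ V ∈ nhds (0 : EuclideanSpace ℝ (Fin d)),
        ∀ᵐ ω ∂volume, ω ∈ V →
          (c * (‖ω‖ ^ (-(2 * s)) * rhoMin r (truncGramian d r s Φ ω))
              ≤ infRatio r (fullGramian d r s Φ ω) (truncGramian d r s Φ ω)) ∧
          rhoMin r (truncGramian d r s Φ ω) ≤ C' * ‖ω‖ ^ (2 * k) := by
  rcases Nat.eq_zero_or_pos r with hr | hr
  · subst hr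
    refine ⟨1, 1, one_pos, one_pos, Set.univ, Filter.univ_mem,
      Filter.Eventually.of_forall fun ω _ => ?_⟩
    haveI h1 : IsEmpty {v : Fin 0 → ℂ // ∑ i, ‖v i‖ ^ 2 = 1} :=
      ⟨fun v => by simpa using v.2⟩
    haveI h2 : IsEmpty {v : Fin 0 → ℂ // v ≠ 0} :=
      ⟨fun v => v.2 (funext fun i => i.elim0)⟩
    constructor
    · simp [rhoMin, infRatio, Real.iInf_of_isEmpty]
    · simp only [rhoMin, Real.iInf_of_isEmpty]
      positivity
  -- main case : r > 0
  set C' : ℝ := 2 * C * ((r : ℝ) * M ^ 2 + 1) with hC'def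
  have hrM : (0 : ℝ) ≤ (r : ℝ) * M ^ 2 := by positivity
  have hC'pos : 0 < C' := by positivity
  set c : ℝ := 1 / (C' + (r : ℝ) * M ^ 2 + 1) with hcdef
  have hden : (0 : ℝ) < C' + (r : ℝ) * M ^ 2 + 1 := by positivity
  have hcpos : 0 < c := by positivity
  have hcbound : c * (C' + (r : ℝ) * M ^ 2) ≤ 1 := by
    rw [hcdef, one_div, inv_mul_le_iff₀ hden]
    nlinarith
  have he : (0 : ℝ) < 2 * k - 2 * s := by linarith
  set δ₀ : ℝ := (1 / (2 * C)) ^ (2 * k - 2 * s)⁻¹ with hδ₀def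
  have hδ₀pos : 0 < δ₀ := Real.rpow_pos_of_pos (by positivity) _
  set δ : ℝ := min 1 δ₀ with hδdef
  have hδpos : 0 < δ := lt_min one_pos hδ₀pos
  refine ⟨c, C', hcpos, hC'pos, (U ∩ U₀) ∩ Metric.ball 0 δ,
    Filter.inter_mem (Filter.inter_mem hU hU₀) (Metric.ball_mem_nhds 0 hδpos), ?_⟩
  filter_upwards [hupper] with ω hup hV
  obtain ⟨⟨hωU, hωU₀⟩, hωb⟩ := hV
  have hωδ : ‖ω‖ < δ := by simpa [mem_ball_zero_iff] using hωb
  have hω1 : ‖ω‖ ≤ 1 := le_trans hωδ.le (min_le_left _ _)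
  have hωδ₀ : ‖ω‖ ≤ δ₀ := le_trans hωδ.le (min_le_right _ _)
  have hε : C * ‖ω‖ ^ (2 * k - 2 * s) ≤ 1 / 2 := by
    have h1 : ‖ω‖ ^ (2 * k - 2 * s) ≤ δ₀ ^ (2 * k - 2 * s) :=
      Real.rpow_le_rpow (norm_nonneg _) hωδ₀ he.le
    have h2 : δ₀ ^ (2 * k - 2 * s) = 1 / (2 * C) := by
      rw [hδ₀def, ← Real.rpow_mul (by positivity), inv_mul_cancel₀ he.ne', Real.rpow_one]
    calc C * ‖ω‖ ^ (2 * k - 2 * s) ≤ C * (1 / (2 * C)) := by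
          rw [← h2]; exact mul_le_mul_of_nonneg_left h1 hC.le
      _ = 1 / 2 := by field_simp
  -- notation
  set T : ℝ := ‖ω‖ ^ (2 * s) with hTdef
  set A : ℝ := (r : ℝ) * M ^ 2 * T with hAdef
  set ρ : ℝ := rhoMin r (truncGramian d r s Φ ω) with hρdef
  set I : ℝ := infRatio r (fullGramian d r s Φ ω) (truncGramian d r s Φ ω) with hIdef
  specialize hup hωU
  have hM0 : 0 ≤ M := le_trans (norm_nonneg _) (hbdd ω hωU₀ ⟨0, hr⟩)
  have hT0 : 0 ≤ T := Real.rpow_nonneg (norm_nonneg _) _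
  have hA0 : 0 ≤ A := by positivity
  have hρ0 : 0 ≤ ρ := rhoMin_nonneg d r s Φ hsum ω
  -- the key lower bound  ρ/(ρ+A) ≤ I
  haveI : Nonempty {v : Fin r → ℂ // v ≠ 0} := by
    refine ⟨⟨fun _ => 1, ?_⟩⟩
    intro h
    have := congrFun h ⟨0, hr⟩
    simpa using this
  have key : ρ / (ρ + A) ≤ I := by
    rw [hIdef]
    unfold infRatio
    refine le_ciInf fun vv => ?_
    obtain ⟨v, hv⟩ := vv
    set x : ℝ := qForm r (truncGramian d r s Φ ω) v with hxdef
    set t : ℝ := ∑ i, ‖v i‖ ^ 2 with htdef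
    have hx0 : 0 ≤ x := qForm_trunc_nonneg d r s Φ hsum ω v
    have ht : 0 < t := by
      obtain ⟨i, hi⟩ := Function.ne_iff.mp hv
      refine Finset.sum_pos' (fun j _ => by positivity) ⟨i, Finset.mem_univ i, ?_⟩
      have : 0 < ‖v i‖ := norm_pos_iff.mpr hi
      positivity
    -- Cauchy–Schwarz bound on the rank-one part
    have hCS : Complex.normSq (star (Φ ω) ⬝ᵥ v) ≤ (r : ℝ) * M ^ 2 * t := by
      have hnz : ‖star (Φ ω) ⬝ᵥ v‖ ≤ M * ∑ i, ‖v i‖ := by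
        calc ‖star (Φ ω) ⬝ᵥ v‖ ≤ ∑ i, ‖star (Φ ω i) * v i‖ := by
              simpa [dotProduct] using norm_sum_le Finset.univ fun i => star (Φ ω i) * v i
          _ ≤ ∑ i, M * ‖v i‖ := by
              refine Finset.sum_le_sum fun i _ => ?_
              rw [norm_mul, norm_star]
              exact mul_le_mul_of_nonneg_right (hbdd ω hωU₀ i) (norm_nonneg _)
          _ = M * ∑ i, ‖v i‖ := by rw [Finset.mul_sum]
      have hsq : (∑ i, ‖v i‖) ^ 2 ≤ (r : ℝ) * t := by
        have := sq_sum_le_card_mul_sum_sq (s := (Finset.univ : Finset (Fin r)))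
          (f := fun i => ‖v i‖)
        simpa [htdef] using this
      have h1 : Complex.normSq (star (Φ ω) ⬝ᵥ v) = ‖star (Φ ω) ⬝ᵥ v‖ ^ 2 := by
        rw [Complex.normSq_eq_norm_sq]
      calc Complex.normSq (star (Φ ω) ⬝ᵥ v) = ‖star (Φ ω) ⬝ᵥ v‖ ^ 2 := h1
        _ ≤ (M * ∑ i, ‖v i‖) ^ 2 :=
            pow_le_pow_left₀ (norm_nonneg _) hnz 2
        _ = M ^ 2 * (∑ i, ‖v i‖) ^ 2 := by ring
        _ ≤ M ^ 2 * ((r : ℝ) * t) := mul_le_mul_of_nonneg_left hsq (by positivity)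
        _ = (r : ℝ) * M ^ 2 * t := by ring
    -- value of the full quadratic form
    have hy : qForm r (fullGramian d r s Φ ω) v
        = x + T * Complex.normSq (star (Φ ω) ⬝ᵥ v) := by
      rw [fullGramian, qForm_add, qForm_smul_vecMulVec, hxdef, hTdef]
    have hyx : x ≤ qForm r (fullGramian d r s Φ ω) v := by
      rw [hy]
      nlinarith [Complex.normSq_nonneg (star (Φ ω) ⬝ᵥ v), hT0]
    have hyub : qForm r (fullGramian d r s Φ ω) v ≤ x + A * t := by
      rw [hy, hAdef]
      nlinarith [mul_le_mul_of_nonneg_left hCS hT0]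
    -- ρ * t ≤ x
    have hρx : ρ * t ≤ x := by
      set w : Fin r → ℂ := ((Real.sqrt t)⁻¹ : ℂ) • v with hwdef
      have hst : Real.sqrt t > 0 := Real.sqrt_pos.mpr ht
      have hw : ∑ i, ‖w i‖ ^ 2 = 1 := by
        have : ∀ i, ‖w i‖ ^ 2 = (Real.sqrt t)⁻¹ ^ 2 * ‖v i‖ ^ 2 := by
          intro i
          rw [hwdef]
          simp [norm_smul, mul_pow, abs_of_pos (inv_pos.mpr hst)]
        rw [Finset.sum_congr rfl fun i _ => this i, ← Finset.mul_sum, ← htdef,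
          inv_pow, Real.sq_sqrt ht.le, inv_mul_cancel₀ ht.ne']
      have hbdd' : BddBelow (Set.range fun v : {v : Fin r → ℂ // ∑ i, ‖v i‖ ^ 2 = 1}
          => qForm r (truncGramian d r s Φ ω) v.1) := by
        refine ⟨0, ?_⟩
        rintro _ ⟨u, rfl⟩
        exact qForm_trunc_nonneg d r s Φ hsum ω u.1
      have hle : ρ ≤ qForm r (truncGramian d r s Φ ω) w := by
        rw [hρdef]
        unfold rhoMin
        exact ciInf_le hbdd' ⟨w, hw⟩
      have hqw : qForm r (truncGramian d r s Φ ω) w = (Real.sqrt t)⁻¹ ^ 2 * x := by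
        rw [hwdef]
        have := qForm_smul_vec r (truncGramian d r s Φ ω) (Real.sqrt t)⁻¹ v
        simpa [hxdef] using this
      rw [hqw, inv_pow, Real.sq_sqrt ht.le] at hle
      calc ρ * t ≤ t⁻¹ * x * t := mul_le_mul_of_nonneg_right hle ht.le
        _ = x := by field_simp
    -- conclude
    rcases eq_or_lt_of_le hx0 with hx | hx
    · -- x = 0 ⇒ ρ = 0
      have hxz : x = 0 := hx.symm
      have hρ0' : ρ = 0 := le_antisymm (by nlinarith [hρx, ht, hρ0]) hρ0
      rw [hρ0', ← hx]
      simp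
    · have hypos : 0 < qForm r (fullGramian d r s Φ ω) v := lt_of_lt_of_le hx hyx
      have hxAt : 0 < x + A * t :=
        add_pos_of_pos_of_nonneg hx (mul_nonneg hA0 ht.le)
      have step1 : x / (x + A * t) ≤ x / qForm r (fullGramian d r s Φ ω) v := by
        rw [div_le_div_iff₀ hxAt hypos]
        exact mul_le_mul_of_nonneg_left hyub hx0
      have step2 : ρ / (ρ + A) ≤ x / (x + A * t) := by
        rcases eq_or_lt_of_le (add_nonneg hρ0 hA0) with h0 | h0
        · rw [← h0]
          simp only [div_zero]
          exact div_nonneg hx0 hxAt.le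
        · rw [div_le_div_iff₀ h0 hxAt]
          nlinarith [mul_le_mul_of_nonneg_right hρx hA0]
      exact le_trans step2 step1
  have hI0 : 0 ≤ I := le_trans (div_nonneg hρ0 (add_nonneg hρ0 hA0)) key
  -- conclusion (b)
  have hb : ρ ≤ C' * ‖ω‖ ^ (2 * k) := by
    have hεI : ρ / (ρ + A) ≤ C * ‖ω‖ ^ (2 * k - 2 * s) := le_trans key hup
    have hρA : ρ ≤ C * ‖ω‖ ^ (2 * k - 2 * s) * (ρ + A) := by
      rcases eq_or_lt_of_le (add_nonneg hρ0 hA0) with h0 | h0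
      · rw [← h0, mul_zero]
        linarith
      · exact (div_le_iff₀ h0).mp hεI
    rcases eq_or_lt_of_le (norm_nonneg ω) with hω0 | hω0
    · -- ω = 0
      have hz : (‖ω‖ : ℝ) ^ (2 * k - 2 * s) = 0 := by
        rw [← hω0, Real.zero_rpow he.ne']
      rw [hz, mul_zero, zero_mul] at hρA
      have : ρ ≤ 0 := hρA
      have hρz : ρ = 0 := le_antisymm this hρ0
      rw [hρz]
      exact mul_nonneg hC'pos.le (Real.rpow_nonneg (norm_nonneg _) _)
    · have hadd : ‖ω‖ ^ (2 * k - 2 * s) * T = ‖ω‖ ^ (2 * k) := by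
        rw [hTdef, ← Real.rpow_add hω0]
        ring_nf
      have h12 : C * ‖ω‖ ^ (2 * k - 2 * s) ≤ 1 / 2 := hε
      have hrpow : (0:ℝ) ≤ ‖ω‖ ^ (2 * k - 2 * s) := Real.rpow_nonneg (norm_nonneg _) _
      -- ρ ≤ ε ρ + ε A ≤ ρ/2 + ε A ⇒ ρ ≤ 2 ε A
      have h2εA : ρ ≤ 2 * (C * ‖ω‖ ^ (2 * k - 2 * s)) * A := by
        nlinarith [mul_le_mul_of_nonneg_right h12 hρ0, hρA, hA0,
          mul_nonneg hrpow hA0]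
      calc ρ ≤ 2 * (C * ‖ω‖ ^ (2 * k - 2 * s)) * A := h2εA
        _ = 2 * C * ((r:ℝ) * M ^ 2) * (‖ω‖ ^ (2 * k - 2 * s) * T) := by rw [hAdef]; ring
        _ = 2 * C * ((r:ℝ) * M ^ 2) * ‖ω‖ ^ (2 * k) := by rw [hadd]
        _ ≤ C' * ‖ω‖ ^ (2 * k) := by
            have h0 : (0:ℝ) ≤ ‖ω‖ ^ (2 * k) := Real.rpow_nonneg (norm_nonneg _) _
            rw [hC'def]
            nlinarith [mul_nonneg hC.le h0]
  refine ⟨?_, hb⟩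
  -- conclusion (a)
  rw [Real.rpow_neg (norm_nonneg ω), ← hTdef]
  rcases eq_or_lt_of_le hT0 with hT | hTpos
  · rw [← hT]
    simpa using hI0
  · -- T > 0
    have hωkT : ‖ω‖ ^ (2 * k) ≤ T := by
      rcases eq_or_lt_of_le (norm_nonneg ω) with hω0 | hω0
      · have hs0 : 2 * s = 0 := by
          by_contra hs0
          rw [hTdef, ← hω0, Real.zero_rpow hs0] at hTpos
          exact lt_irrefl 0 hTpos
        have hk0 : 0 < 2 * k := by
          have : s = 0 := by linarith
          linarith
        rw [← hω0, Real.zero_rpow hk0.ne', hTdef, ← hω0, hs0, Real.rpow_zero]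
        norm_num
      · exact Real.rpow_le_rpow_of_exponent_ge hω0 hω1 (by linarith)
    rcases eq_or_lt_of_le hρ0 with hρz | hρpos
    · rw [← hρz]
      simpa using hI0
    · refine le_trans ?_ key
      have hρA : 0 < ρ + A := add_pos_of_pos_of_nonneg hρpos hA0
      have h1 : c * (T⁻¹ * ρ) = c * ρ / T := by field_simp
      rw [h1, div_le_div_iff₀ hTpos hρA]
      have hρC' : ρ ≤ C' * T := le_trans hb (mul_le_mul_of_nonneg_left hωkT hC'pos.le)
      -- c ρ (ρ + A) ≤ ρ T  ⇐  c (ρ + A) ≤ T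
      have hcA : c * (ρ + A) ≤ T := by
        have : ρ + A ≤ (C' + (r:ℝ) * M ^ 2) * T := by rw [hAdef]; linarith [hρC']
        calc c * (ρ + A) ≤ c * ((C' + (r:ℝ) * M ^ 2) * T) :=
              mul_le_mul_of_nonneg_left this hcpos.le
          _ = c * (C' + (r:ℝ) * M ^ 2) * T := by ring
          _ ≤ 1 * T := mul_le_mul_of_nonneg_right hcbound hT0
          _ = T := one_mul T
      nlinarith [mul_le_mul_of_nonneg_left hcA hρpos.le]
end

section
/- Let P be an r×r matrix of trigonometric polynomials and v a ℂ^r-valued trigonometric polynomial on ℝ^d satisfying Condition Z_k: v*(2·)P − v* has a zero of order k at 0, and v*(2·)P has a zero of order k at each πl for l ∈ {0,1}^d \ {0}. Let Φ̂ : ℝ^d → ℂ^r be entire with Φ̂(2·) = PΦ̂. Then for every α ∈ 2πℤ^d \ {0}, the function ω ↦ v*(ω)Φ̂(ω+α) has a zero of order k at ω = 0. -/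
/-!
Write `S_β(ω) = v*(ω) Φ̂(ω + 2πβ)` and `G = v*(2·) P`. For `β = l + 2γ` with `l ∈ {0,1}^d`,
refining `Φ̂` once and using the periodicity of `v` and `P` gives
`S_β(ω) = G(ω/2 + πl) Φ̂(ω/2 + πl + 2πγ)`.
If `l ≠ 0`, Condition `Z_k` says that `G` vanishes to order `k` at `πl`, and by the Leibniz rule
so does the product at `ω = 0`. If `l = 0`, split `G = (G - v*) + v*`: the first part vanishes to
order `k` at `0` by Condition `Z_k`, and the second gives `S_γ(ω/2)`. So the claim passes from
`γ` to `2γ`, and every nonzero `β` is reached from some `l + 2γ` with `l ≠ 0` by doubling.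
-/

open Matrix

noncomputable def cornerPt (d : ℕ) (l : Fin d → ℤ) : EuclideanSpace ℝ (Fin d) :=
  (EuclideanSpace.equiv (Fin d) ℝ).symm fun i => Real.pi * (l i : ℝ)

section VanishesToOrder

variable {𝕜 : Type*} [NontriviallyNormedField 𝕜]
  {D E F G : Type*} [NormedAddCommGroup D] [NormedSpace 𝕜 D] [NormedAddCommGroup E]
  [NormedSpace 𝕜 E] [NormedAddCommGroup F] [NormedSpace 𝕜 F] [NormedAddCommGroup G]
  [NormedSpace 𝕜 G]

variable (𝕜) in
def VanishesToOrder (k : ℕ) (f : E → F) (x : E) : Prop :=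
  ∀ n < k, iteratedFDeriv 𝕜 n f x = 0

namespace VanishesToOrder

variable {k : ℕ} {f g : E → F} {x : E}

theorem comp_add_right {a : E} (h : VanishesToOrder 𝕜 k f (x + a)) :
    VanishesToOrder 𝕜 k (fun y => f (y + a)) x := fun n hn => by
  rw [iteratedFDeriv_comp_add_right, h n hn]

theorem comp_continuousLinearEquiv (L : D ≃L[𝕜] E) {x : D} (h : VanishesToOrder 𝕜 k f (L x)) :
    VanishesToOrder 𝕜 k (f ∘ L) x := fun n hn => by
  have hcomp := L.iteratedFDerivWithin_comp_right f uniqueDiffOn_univ (Set.mem_univ (L x)) n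
  rw [Set.preimage_univ, iteratedFDerivWithin_univ, iteratedFDerivWithin_univ, h n hn] at hcomp
  rw [hcomp]
  rfl

theorem comp_smul {c : 𝕜} (hc : c ≠ 0) (h : VanishesToOrder 𝕜 k f (c • x)) :
    VanishesToOrder 𝕜 k (fun y => f (c • y)) x :=
  comp_continuousLinearEquiv (ContinuousLinearEquiv.smulLeft (Units.mk0 c hc)) h

theorem add (hf : ContDiffAt 𝕜 k f x) (hg : ContDiffAt 𝕜 k g x)
    (hf0 : VanishesToOrder 𝕜 k f x) (hg0 : VanishesToOrder 𝕜 k g x) :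
    VanishesToOrder 𝕜 k (fun y => f y + g y) x := fun n hn => by
  have hle : (n : WithTop ℕ∞) ≤ k := by exact_mod_cast hn.le
  rw [fun_iteratedFDeriv_add_apply (hf.of_le hle) (hg.of_le hle), hf0 n hn, hg0 n hn, add_zero]

theorem bilinear_left (B : E →L[𝕜] F →L[𝕜] G) {f : D → E} {g : D → F} {x : D}
    (hf : ContDiff 𝕜 k f) (hg : ContDiff 𝕜 k g) (h : VanishesToOrder 𝕜 k f x) :
    VanishesToOrder 𝕜 k (fun y => B (f y) (g y)) x := fun n hn => by
  have hbound := B.norm_iteratedFDeriv_le_of_bilinear hf hg x (n := n) (by exact_mod_cast hn.le)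
  rw [Finset.sum_eq_zero fun i hi => by
    rw [h i (lt_of_le_of_lt (Finset.mem_range_succ_iff.mp hi) hn), norm_zero, mul_zero, zero_mul],
    mul_zero] at hbound
  exact norm_le_zero_iff.mp hbound

end VanishesToOrder

end VanishesToOrder

section DotProduct

variable {𝕜 A ι E : Type*} [NontriviallyNormedField 𝕜] [NormedRing A] [NormedAlgebra 𝕜 A]
  [Fintype ι] [NormedAddCommGroup E] [NormedSpace 𝕜 E] {f g : E → ι → A}

theorem ContDiff.dotProduct {n : WithTop ℕ∞} (hf : ContDiff 𝕜 n f) (hg : ContDiff 𝕜 n g) :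
    ContDiff 𝕜 n fun y => f y ⬝ᵥ g y :=
  ContDiff.sum fun i _ => (contDiff_pi.1 hf i).mul (contDiff_pi.1 hg i)

theorem ContDiff.vecMul {m : Type*} [Fintype m] {n : WithTop ℕ∞} {M : E → Matrix ι m A}
    (hf : ContDiff 𝕜 n f) (hM : ∀ i j, ContDiff 𝕜 n fun y => M y i j) :
    ContDiff 𝕜 n fun y => f y ᵥ* M y :=
  contDiff_pi.2 fun j => hf.dotProduct (contDiff_pi.2 fun i => hM i j)

theorem VanishesToOrder.dotProduct_left [CompleteSpace 𝕜] [FiniteDimensional 𝕜 A] {k : ℕ}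
    {x : E} (hf : ContDiff 𝕜 k f) (hg : ContDiff 𝕜 k g) (h : VanishesToOrder 𝕜 k f x) :
    VanishesToOrder 𝕜 k (fun y => f y ⬝ᵥ g y) x :=
  h.bilinear_left
    (dotProductBilin 𝕜 𝕜 : (ι → A) →ₗ[𝕜] (ι → A) →ₗ[𝕜] A).toContinuousBilinearMap hf hg

end DotProduct

theorem Int.sum_natAbs_lt_sum_natAbs_two_smul {ι : Type*} [Fintype ι] {γ : ι → ℤ}
    (hγ : γ ≠ 0) : ∑ i, (γ i).natAbs < ∑ i, ((2 • γ) i).natAbs := by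
  obtain ⟨j, hj⟩ := Function.ne_iff.mp hγ
  refine Finset.sum_lt_sum (fun i _ => ?_) ⟨j, Finset.mem_univ j, ?_⟩ <;> simp at hj ⊢ <;> omega

theorem Int.pi_induction_two_smul {ι : Type*} [Fintype ι] {motive : (ι → ℤ) → Prop}
    (corner : ∀ l γ : ι → ℤ, (∀ i, l i = 0 ∨ l i = 1) → l ≠ 0 → motive (l + 2 • γ))
    (double : ∀ γ : ι → ℤ, γ ≠ 0 → motive γ → motive (2 • γ)) (β : ι → ℤ) (hβ : β ≠ 0) :
    motive β := by
  set l : ι → ℤ := fun i => β i % 2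
  set γ : ι → ℤ := fun i => β i / 2
  have hβ_eq : β = l + 2 • γ := by funext i; simp [l, γ]; omega
  by_cases hl : l = 0
  · rw [hl, zero_add] at hβ_eq
    have hγ : γ ≠ 0 := fun hγ => hβ (by simpa [hγ] using hβ_eq)
    rw [hβ_eq]
    exact double γ hγ (Int.pi_induction_two_smul corner double γ hγ)
  · rw [hβ_eq]
    exact corner l γ (fun i => Int.emod_two_eq_zero_or_one (β i)) hl
termination_by ∑ i, (β i).natAbs
decreasing_by
  rw [hl, zero_add] at hβ_eq
  conv_rhs => rw [hβ_eq]
  exact Int.sum_natAbs_lt_sum_natAbs_two_smul hγ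

section Refinement

variable {d r k : ℕ} {P : EuclideanSpace ℝ (Fin d) → Matrix (Fin r) (Fin r) ℂ}
  {v Φ : EuclideanSpace ℝ (Fin d) → (Fin r → ℂ)}

theorem two_smul_cornerPt (β : Fin d → ℤ) : (2 : ℝ) • cornerPt d β = lattPt d β := by
  ext i; simp [lattPt, cornerPt, EuclideanSpace.equiv]; ring

theorem cornerPt_add_two_smul (l γ : Fin d → ℤ) :
    cornerPt d (l + 2 • γ) = cornerPt d l + lattPt d γ := by
  ext i; simp [lattPt, cornerPt, EuclideanSpace.equiv]; ring

theorem cornerPt_zero : cornerPt d 0 = 0 := by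
  ext i; simp [cornerPt]

theorem pairing_lattPt_eq_refinement
    (hPper : ∀ (ω : EuclideanSpace ℝ (Fin d)) (β : Fin d → ℤ), P (ω + lattPt d β) = P ω)
    (hvper : ∀ (ω : EuclideanSpace ℝ (Fin d)) (β : Fin d → ℤ), v (ω + lattPt d β) = v ω)
    (href : ∀ ω : EuclideanSpace ℝ (Fin d), Φ ((2 : ℝ) • ω) = P ω *ᵥ Φ ω)
    (l γ : Fin d → ℤ) (ω : EuclideanSpace ℝ (Fin d)) :
    star (v ω) ⬝ᵥ Φ (ω + lattPt d (l + 2 • γ)) =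
      (star (v ((2 : ℝ) • ((2⁻¹ : ℝ) • ω + cornerPt d l))) ᵥ* P ((2⁻¹ : ℝ) • ω + cornerPt d l))
        ⬝ᵥ Φ ((2⁻¹ : ℝ) • ω + cornerPt d l + lattPt d γ) := by
  set u := (2⁻¹ : ℝ) • ω + cornerPt d l
  have hu : (2 : ℝ) • u = ω + lattPt d l := by
    rw [smul_add, smul_inv_smul₀ two_ne_zero, two_smul_cornerPt]
  have hshift : ω + lattPt d (l + 2 • γ) = (2 : ℝ) • (u + lattPt d γ) := by
    rw [smul_add, hu, ← two_smul_cornerPt (l + 2 • γ), cornerPt_add_two_smul, smul_add,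
      two_smul_cornerPt, add_assoc]
  rw [hshift, href, hPper, dotProduct_mulVec, hu, hvper]

theorem vanishesToOrder_pairing_lattPt_add_two_smul
    (hPper : ∀ (ω : EuclideanSpace ℝ (Fin d)) (β : Fin d → ℤ), P (ω + lattPt d β) = P ω)
    (hvper : ∀ (ω : EuclideanSpace ℝ (Fin d)) (β : Fin d → ℤ), v (ω + lattPt d β) = v ω)
    (href : ∀ ω : EuclideanSpace ℝ (Fin d), Φ ((2 : ℝ) • ω) = P ω *ᵥ Φ ω)
    (hG : ContDiff ℝ k fun ω => star (v ((2 : ℝ) • ω)) ᵥ* P ω) (hΦ : ContDiff ℝ k Φ)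
    {l : Fin d → ℤ}
    (hl : VanishesToOrder ℝ k (fun ω => star (v ((2 : ℝ) • ω)) ᵥ* P ω) (cornerPt d l))
    (γ : Fin d → ℤ) :
    VanishesToOrder ℝ k (fun ω => star (v ω) ⬝ᵥ Φ (ω + lattPt d (l + 2 • γ))) 0 := by
  simp_rw [pairing_lattPt_eq_refinement hPper hvper href]
  set G := fun ω => star (v ((2 : ℝ) • ω)) ᵥ* P ω
  have haff : ContDiff ℝ k fun ω : EuclideanSpace ℝ (Fin d) => (2⁻¹ : ℝ) • ω + cornerPt d l :=
    (contDiff_const_smul _).add contDiff_const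
  have hGl : VanishesToOrder ℝ k (fun ω => G ((2⁻¹ : ℝ) • ω + cornerPt d l)) 0 :=
    VanishesToOrder.comp_smul (f := fun y => G (y + cornerPt d l)) (by norm_num)
      (by rw [smul_zero]; exact VanishesToOrder.comp_add_right (by rwa [zero_add]))
  exact hGl.dotProduct_left (hG.comp haff) (hΦ.comp (haff.add contDiff_const))

theorem vanishesToOrder_pairing_lattPt_two_smul
    (hPper : ∀ (ω : EuclideanSpace ℝ (Fin d)) (β : Fin d → ℤ), P (ω + lattPt d β) = P ω)
    (hvper : ∀ (ω : EuclideanSpace ℝ (Fin d)) (β : Fin d → ℤ), v (ω + lattPt d β) = v ω)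
    (href : ∀ ω : EuclideanSpace ℝ (Fin d), Φ ((2 : ℝ) • ω) = P ω *ᵥ Φ ω)
    (hG : ContDiff ℝ k fun ω => star (v ((2 : ℝ) • ω)) ᵥ* P ω) (hv : ContDiff ℝ k v)
    (hΦ : ContDiff ℝ k Φ)
    (hZ0 : VanishesToOrder ℝ k (fun ω => star (v ((2 : ℝ) • ω)) ᵥ* P ω - star (v ω)) 0)
    {γ : Fin d → ℤ} (hγ : VanishesToOrder ℝ k (fun ω => star (v ω) ⬝ᵥ Φ (ω + lattPt d γ)) 0) :
    VanishesToOrder ℝ k (fun ω => star (v ω) ⬝ᵥ Φ (ω + lattPt d (2 • γ))) 0 := by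
  set G := fun ω => star (v ((2 : ℝ) • ω)) ᵥ* P ω
  set w := fun ω => star (v ω)
  have hsplit : ∀ ω, star (v ω) ⬝ᵥ Φ (ω + lattPt d (2 • γ)) =
      (G ((2⁻¹ : ℝ) • ω) - w ((2⁻¹ : ℝ) • ω)) ⬝ᵥ Φ ((2⁻¹ : ℝ) • ω + lattPt d γ) +
        w ((2⁻¹ : ℝ) • ω) ⬝ᵥ Φ ((2⁻¹ : ℝ) • ω + lattPt d γ) := fun ω => by
    rw [sub_dotProduct, sub_add_cancel, ← zero_add (2 • γ),
      pairing_lattPt_eq_refinement hPper hvper href, cornerPt_zero, add_zero]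
  have hhalf : ContDiff ℝ k fun ω : EuclideanSpace ℝ (Fin d) => (2⁻¹ : ℝ) • ω :=
    contDiff_const_smul _
  have hw : ContDiff ℝ k fun ω => w ((2⁻¹ : ℝ) • ω) := ((starL' ℝ).contDiff.comp hv).comp hhalf
  have hGw : ContDiff ℝ k fun ω => G ((2⁻¹ : ℝ) • ω) - w ((2⁻¹ : ℝ) • ω) :=
    (hG.comp hhalf).sub hw
  have hΦγ : ContDiff ℝ k fun ω => Φ ((2⁻¹ : ℝ) • ω + lattPt d γ) :=
    hΦ.comp (hhalf.add contDiff_const)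
  simp_rw [hsplit]
  refine VanishesToOrder.add (hGw.dotProduct hΦγ).contDiffAt (hw.dotProduct hΦγ).contDiffAt
    (VanishesToOrder.dotProduct_left hGw hΦγ ?_) ?_
  · exact VanishesToOrder.comp_smul (f := fun ω => G ω - w ω) (by norm_num) (by rwa [smul_zero])
  · exact VanishesToOrder.comp_smul (f := fun ω => w ω ⬝ᵥ Φ (ω + lattPt d γ)) (by norm_num)
      (by rwa [smul_zero])

end Refinement

/-- Condition `Z_k` implies that for every `α ∈ 2πℤ^d \ 0` the
function `ω ↦ v*(ω) Φ̂(ω+α)` has a zero of order `k` at the origin.  Here `P` is a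
(2π-periodic, smooth, e.g. trigonometric polynomial) matrix mask, `v` a 2π-periodic
smooth vector (e.g. a trigonometric polynomial), and `Φ̂` smooth (e.g. entire) with
`Φ̂(2·) = P Φ̂`.  A zero of order `k` means all derivatives of order `< k` vanish. -/
theorem conditionZk_implies_SF (d r k : ℕ)
    (P : EuclideanSpace ℝ (Fin d) → Matrix (Fin r) (Fin r) ℂ)
    (v Φ : EuclideanSpace ℝ (Fin d) → (Fin r → ℂ))
    (hPsmooth : ∀ i j, ContDiff ℝ ⊤ fun ω => P ω i j)
    (hvsmooth : ContDiff ℝ ⊤ v)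
    (hΦsmooth : ContDiff ℝ ⊤ Φ)
    (hPper : ∀ (ω : EuclideanSpace ℝ (Fin d)) (β : Fin d → ℤ), P (ω + lattPt d β) = P ω)
    (hvper : ∀ (ω : EuclideanSpace ℝ (Fin d)) (β : Fin d → ℤ), v (ω + lattPt d β) = v ω)
    (href : ∀ ω : EuclideanSpace ℝ (Fin d), Φ ((2 : ℝ) • ω) = P ω *ᵥ Φ ω)
    (hZ0 : ∀ n < k,
      iteratedFDeriv ℝ n
        (fun ω : EuclideanSpace ℝ (Fin d) => star (v ((2 : ℝ) • ω)) ᵥ* P ω - star (v ω))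
        0 = 0)
    (hZl : ∀ l : Fin d → ℤ, (∀ i, l i = 0 ∨ l i = 1) → l ≠ 0 → ∀ n < k,
      iteratedFDeriv ℝ n
        (fun ω : EuclideanSpace ℝ (Fin d) => star (v ((2 : ℝ) • ω)) ᵥ* P ω)
        (cornerPt d l) = 0) :
    ∀ α : Fin d → ℤ, α ≠ 0 → ∀ n < k,
      iteratedFDeriv ℝ n
        (fun ω : EuclideanSpace ℝ (Fin d) => star (v ω) ⬝ᵥ Φ (ω + lattPt d α))
        0 = 0 := by
  have hv : ContDiff ℝ k v := hvsmooth.of_le le_top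
  have hΦ : ContDiff ℝ k Φ := hΦsmooth.of_le le_top
  have hG : ContDiff ℝ k fun ω => star (v ((2 : ℝ) • ω)) ᵥ* P ω :=
    ((starL' ℝ).contDiff.comp (hv.comp (contDiff_const_smul 2))).vecMul
      fun i j => (hPsmooth i j).of_le le_top
  exact Int.pi_induction_two_smul
    (motive := fun α => VanishesToOrder ℝ k (fun ω => star (v ω) ⬝ᵥ Φ (ω + lattPt d α)) 0)
    (fun l γ hl01 hl => vanishesToOrder_pairing_lattPt_add_two_smul hPper hvper href hG hΦ
      (hZl l hl01 hl) γ)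
    (fun γ _ hγ => vanishesToOrder_pairing_lattPt_two_smul hPper hvper href hG hv hΦ hZ0 hγ)
end
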